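/- On the noncommutative algebraic 2-torus quantum principal bundle B := A^{coH} ⊆ A = O_θ(T²) with H = O(U(1)) and the complete calculus with Ω¹(A) = span_A{du, dv}, every connection 1-form is flat: its curvature R_s(h) := d s(ϖ(h)) + s(ϖ(π_ε(h₁))) ∧ s(ϖ(π_ε(h₂))) vanishes for all h ∈ H⁺. -/

import Mathlib

open TensorProduct

noncomputable section

namespace QPBPaper

variable (k : Type) [Field k]

/-! ### Convolution algebra -/

/-- Convolution product of linear maps from a coalgebra to an algebra. -/
def conv {C A : Type} [AddCommGroup C] [Module k C] [Coalgebra k C]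
    [Ring A] [Algebra k A] (f g : C →ₗ[k] A) : C →ₗ[k] A :=
  LinearMap.mul' k A ∘ₗ TensorProduct.map f g ∘ₗ Coalgebra.comul

/-- Convolution unit `η ∘ ε`. -/
def convUnit {C A : Type} [AddCommGroup C] [Module k C] [Coalgebra k C]
    [Ring A] [Algebra k A] : C →ₗ[k] A :=
  Algebra.linearMap k A ∘ₗ Coalgebra.counit

def IsConvInvertible {C A : Type} [AddCommGroup C] [Module k C] [Coalgebra k C]
    [Ring A] [Algebra k A] (f : C →ₗ[k] A) : Prop :=
  ∃ g : C →ₗ[k] A, conv k f g = convUnit k ∧ conv k g f = convUnit k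

/-! ### Balanced tensor products over (co)invariants -/

section BalQ
variable {Ω : Type} [Ring Ω] [Algebra k Ω]

/-- The `S`-balancing relations inside `Ω ⊗ Ω`. -/
def balQ (S : Set Ω) : Submodule k (Ω ⊗[k] Ω) :=
  Submodule.span k
    {x | ∃ ω η β : Ω, β ∈ S ∧ x = (ω * β) ⊗ₜ[k] η - ω ⊗ₜ[k] (β * η)}

variable (S : Set Ω)

/-- The balanced tensor product `Ω ⊗_S Ω`. -/
abbrev BQuot := (Ω ⊗[k] Ω) ⧸ balQ k S

/-- Projection to the balanced tensor product. -/
def mkBQ : Ω ⊗[k] Ω →ₗ[k] BQuot k S := Submodule.mkQ (balQ k S)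

/-- Left multiplication on the first factor of `Ω ⊗_S Ω`. -/
def lBQ (x : Ω) : BQuot k S →ₗ[k] BQuot k S :=
  Submodule.mapQ _ _ (LinearMap.rTensor Ω (LinearMap.mulLeft k x)) (by
    rw [balQ, Submodule.span_le]
    rintro z ⟨ω, η, β, hβ, rfl⟩
    simp only [SetLike.mem_coe, Submodule.mem_comap, map_sub, LinearMap.rTensor_tmul,
      LinearMap.mulLeft_apply]
    apply Submodule.subset_span
    exact ⟨x * ω, η, β, hβ, by rw [mul_assoc]⟩)

/-- Right multiplication on the second factor of `Ω ⊗_S Ω`. -/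
def rBQ (x : Ω) : BQuot k S →ₗ[k] BQuot k S :=
  Submodule.mapQ _ _ (LinearMap.lTensor Ω (LinearMap.mulRight k x)) (by
    rw [balQ, Submodule.span_le]
    rintro z ⟨ω, η, β, hβ, rfl⟩
    simp only [SetLike.mem_coe, Submodule.mem_comap, map_sub, LinearMap.lTensor_tmul,
      LinearMap.mulRight_apply]
    apply Submodule.subset_span
    exact ⟨ω, η * x, β, hβ, by rw [mul_assoc]⟩)

/-- The multiplication `Ω ⊗_S Ω → Ω`. -/
def mBQ : BQuot k S →ₗ[k] Ω :=
  Submodule.liftQ _ (LinearMap.mul' k Ω) (by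
    rw [balQ, Submodule.span_le]
    rintro z ⟨ω, η, β, hβ, rfl⟩
    simp only [SetLike.mem_coe, LinearMap.mem_ker, map_sub, LinearMap.mul'_apply]
    rw [mul_assoc, sub_self])

/-- The balancing relations in positions `(1,2)` and `(2,3)` of `Ω ⊗ Ω ⊗ Ω`. -/
def bal3 : Submodule k (Ω ⊗[k] (Ω ⊗[k] Ω)) :=
  Submodule.span k
    ({x | ∃ ω η ζ β : Ω, β ∈ S ∧
        x = (ω * β) ⊗ₜ[k] (η ⊗ₜ[k] ζ) - ω ⊗ₜ[k] ((β * η) ⊗ₜ[k] ζ)} ∪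
     {x | ∃ ω η ζ β : Ω, β ∈ S ∧
        x = ω ⊗ₜ[k] ((η * β) ⊗ₜ[k] ζ) - ω ⊗ₜ[k] (η ⊗ₜ[k] (β * ζ))})

/-- The triple balanced tensor product `Ω ⊗_S Ω ⊗_S Ω`. -/
abbrev TQuot := (Ω ⊗[k] (Ω ⊗[k] Ω)) ⧸ bal3 k S

/-- Projection to the triple balanced tensor product. -/
def mkTQ : Ω ⊗[k] (Ω ⊗[k] Ω) →ₗ[k] TQuot k S := Submodule.mkQ (bal3 k S)

/-- Tensoring on the right by `z`: `Ω ⊗_S Ω → Ω ⊗_S Ω ⊗_S Ω`. -/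
def g12 (z : Ω) : BQuot k S →ₗ[k] TQuot k S :=
  Submodule.mapQ _ _ (LinearMap.lTensor Ω ((TensorProduct.mk k Ω Ω).flip z)) (by
    rw [balQ, Submodule.span_le]
    rintro w ⟨ω, η, β, hβ, rfl⟩
    simp only [SetLike.mem_coe, Submodule.mem_comap, map_sub, LinearMap.lTensor_tmul,
      TensorProduct.mk_apply, LinearMap.flip_apply]
    apply Submodule.subset_span
    exact Or.inl ⟨ω, η, z, β, hβ, rfl⟩)

/-- Tensoring on the left by `x`: `Ω ⊗_S Ω → Ω ⊗_S Ω ⊗_S Ω`. -/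
def g23 (x : Ω) : BQuot k S →ₗ[k] TQuot k S :=
  Submodule.mapQ _ _ (TensorProduct.mk k Ω (Ω ⊗[k] Ω) x) (by
    rw [balQ, Submodule.span_le]
    rintro w ⟨ω, η, β, hβ, rfl⟩
    simp only [SetLike.mem_coe, Submodule.mem_comap, map_sub, TensorProduct.mk_apply,
      TensorProduct.tmul_sub]
    apply Submodule.subset_span
    exact Or.inr ⟨x, ω, η, β, hβ, rfl⟩)

/-- Multiplication of the first two factors `Ω ⊗_S Ω ⊗_S Ω → Ω ⊗_S Ω`. -/
def m12 : TQuot k S →ₗ[k] BQuot k S :=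
  Submodule.liftQ _ (mkBQ k S ∘ₗ LinearMap.rTensor Ω (LinearMap.mul' k Ω) ∘ₗ
      (TensorProduct.assoc k Ω Ω Ω).symm.toLinearMap) (by
    rw [bal3, Submodule.span_le]
    rintro w (⟨ω, η, ζ, β, hβ, rfl⟩ | ⟨ω, η, ζ, β, hβ, rfl⟩) <;>
      simp only [SetLike.mem_coe, LinearMap.mem_ker, map_sub, LinearMap.comp_apply,
        LinearEquiv.coe_coe, TensorProduct.assoc_symm_tmul, LinearMap.rTensor_tmul,
        LinearMap.mul'_apply, TensorProduct.tmul_sub, map_sub]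
    · rw [mul_assoc, sub_self]
    · rw [mkBQ, Submodule.mkQ_apply, Submodule.mkQ_apply, ← Submodule.Quotient.mk_sub,
        Submodule.Quotient.mk_eq_zero]
      apply Submodule.subset_span
      exact ⟨ω * η, ζ, β, hβ, by rw [mul_assoc]⟩)

/-- Multiplication of the last two factors `Ω ⊗_S Ω ⊗_S Ω → Ω ⊗_S Ω`. -/
def m23 : TQuot k S →ₗ[k] BQuot k S :=
  Submodule.liftQ _ (mkBQ k S ∘ₗ LinearMap.lTensor Ω (LinearMap.mul' k Ω)) (by
    rw [bal3, Submodule.span_le]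
    rintro w (⟨ω, η, ζ, β, hβ, rfl⟩ | ⟨ω, η, ζ, β, hβ, rfl⟩) <;>
      simp only [SetLike.mem_coe, LinearMap.mem_ker, map_sub, LinearMap.comp_apply,
        LinearMap.lTensor_tmul, LinearMap.mul'_apply]
    · rw [mkBQ, Submodule.mkQ_apply, Submodule.mkQ_apply, ← Submodule.Quotient.mk_sub,
        Submodule.Quotient.mk_eq_zero]
      apply Submodule.subset_span
      exact ⟨ω, η * ζ, β, hβ, by rw [mul_assoc]⟩
    · rw [mul_assoc, sub_self])

end BalQ


/-! ### Comodule algebras and Hopf–Galois extensions -/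

/-- A right `H`-comodule algebra structure on `A`. -/
structure ComodAlg (H A : Type) [Ring H] [Bialgebra k H] [Ring A] [Algebra k A] where
  ρ : A →ₗ[k] A ⊗[k] H
  ρ_one : ρ 1 = 1
  ρ_mul : ∀ a b : A, ρ (a * b) = ρ a * ρ b
  counit_ρ : ∀ a : A,
    TensorProduct.rid k A (LinearMap.lTensor A (Coalgebra.counit (R := k) (A := H)) (ρ a)) = a
  coassoc_ρ : ∀ a : A,
    TensorProduct.assoc k A H H (LinearMap.rTensor H ρ (ρ a))
      = LinearMap.lTensor A (Coalgebra.comul (R := k) (A := H)) (ρ a)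

variable {k}

/-- The subalgebra of coinvariant elements `B = A^{co H}`. -/
def ComodAlg.coinv {H A : Type} [Ring H] [Bialgebra k H] [Ring A] [Algebra k A]
    (c : ComodAlg k H A) : Subalgebra k A where
  carrier := {a : A | c.ρ a = a ⊗ₜ[k] (1 : H)}
  mul_mem' := by
    intro a b ha hb
    simp only [Set.mem_setOf_eq] at *
    rw [c.ρ_mul, ha, hb, Algebra.TensorProduct.tmul_mul_tmul, mul_one]
  one_mem' := by
    simpa [Algebra.TensorProduct.one_def] using c.ρ_one
  add_mem' := by
    intro a b ha hb
    simp only [Set.mem_setOf_eq] at *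
    rw [map_add, ha, hb, TensorProduct.add_tmul]
  algebraMap_mem' := by
    intro r
    show c.ρ (algebraMap k A r) = algebraMap k A r ⊗ₜ[k] (1 : H)
    rw [Algebra.algebraMap_eq_smul_one, map_smul, c.ρ_one,
      Algebra.TensorProduct.one_def, smul_tmul']

lemma ComodAlg.mem_coinv {H A : Type} [Ring H] [Bialgebra k H] [Ring A] [Algebra k A]
    (c : ComodAlg k H A) {a : A} : a ∈ c.coinv ↔ c.ρ a = a ⊗ₜ[k] (1 : H) := Iff.rfl

variable (k)

/-- The `B`-balancing relations inside `A ⊗ A`. -/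
def balancer {H A : Type} [Ring H] [Bialgebra k H] [Ring A] [Algebra k A]
    (c : ComodAlg k H A) : Submodule k (A ⊗[k] A) :=
  balQ k (c.coinv : Set A)

/-- The balanced tensor product `A ⊗_B A`. -/
abbrev AtB {H A : Type} [Ring H] [Bialgebra k H] [Ring A] [Algebra k A]
    (c : ComodAlg k H A) : Type :=
  (A ⊗[k] A) ⧸ balancer k c

/-- Projection `A ⊗ A → A ⊗_B A`. -/
def mkAtB {H A : Type} [Ring H] [Bialgebra k H] [Ring A] [Algebra k A]
    (c : ComodAlg k H A) : A ⊗[k] A →ₗ[k] AtB k c :=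
  Submodule.mkQ (balancer k c)

/-- The Galois map before descending to `A ⊗_B A`. -/
def chi0 {H A : Type} [Ring H] [Bialgebra k H] [Ring A] [Algebra k A]
    (c : ComodAlg k H A) : A ⊗[k] A →ₗ[k] A ⊗[k] H :=
  LinearMap.mul' k (A ⊗[k] H) ∘ₗ
    TensorProduct.map (Algebra.TensorProduct.includeLeft (R := k) (S := k)
      (A := A) (B := H)).toLinearMap c.ρ

lemma chi0_tmul {H A : Type} [Ring H] [Bialgebra k H] [Ring A] [Algebra k A]
    (c : ComodAlg k H A) (x y : A) :
    chi0 k c (x ⊗ₜ[k] y) = (x ⊗ₜ[k] (1 : H)) * c.ρ y := by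
  simp [chi0]

lemma balancer_le_ker_chi0 {H A : Type} [Ring H] [Bialgebra k H] [Ring A] [Algebra k A]
    (c : ComodAlg k H A) : balancer k c ≤ LinearMap.ker (chi0 k c) := by
  rw [balancer, balQ, Submodule.span_le]
  rintro x ⟨a, y, b, hb, rfl⟩
  rw [SetLike.mem_coe] at hb
  rw [SetLike.mem_coe, LinearMap.mem_ker, map_sub, chi0_tmul, chi0_tmul,
    c.ρ_mul, c.mem_coinv.mp hb, ← mul_assoc, Algebra.TensorProduct.tmul_mul_tmul,
    mul_one, sub_self]

/-- The canonical Galois map `χ : A ⊗_B A → A ⊗ H`. -/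
def chiQ {H A : Type} [Ring H] [Bialgebra k H] [Ring A] [Algebra k A]
    (c : ComodAlg k H A) : AtB k c →ₗ[k] A ⊗[k] H :=
  Submodule.liftQ (balancer k c) (chi0 k c) (balancer_le_ker_chi0 k c)

/-! ### Faithful flatness over the coinvariant subalgebra -/

/-- `B`-balancing relations in `A ⊗ M` for a left `B`-module `M`. -/
def relBalancer {A : Type} [Ring A] [Algebra k A] (B : Subalgebra k A)
    (M : Type) [AddCommGroup M] [Module k M] [Module B M] [IsScalarTower k B M] :
    Submodule k (A ⊗[k] M) :=
  Submodule.span k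
    {x | ∃ (a : A) (b : B) (m : M), x = (a * (b : A)) ⊗ₜ[k] m - a ⊗ₜ[k] (b • m)}

/-- `A` is a faithfully flat right `B`-module: tensoring over `B` preserves and
reflects injectivity resp. nontriviality. -/
def IsFaithfullyFlatOver {A : Type} [Ring A] [Algebra k A] (B : Subalgebra k A) : Prop :=
  (∀ (M N : Type) [AddCommGroup M] [Module k M] [Module B M] [IsScalarTower k B M]
      [AddCommGroup N] [Module k N] [Module B N] [IsScalarTower k B N]
      (f : M →ₗ[B] N), Function.Injective f →
      ∀ x : A ⊗[k] M,
        LinearMap.lTensor A (f.restrictScalars k) x ∈ relBalancer k B N →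
          x ∈ relBalancer k B M) ∧
  (∀ (M : Type) [AddCommGroup M] [Module k M] [Module B M] [IsScalarTower k B M],
      (⊥ : Submodule k M) ≠ ⊤ → relBalancer k B M ≠ ⊤)

/-- A quantum principal bundle: a faithfully flat Hopf–Galois extension. -/
structure QPB (H A : Type) [Ring H] [HopfAlgebra k H] [Ring A] [Algebra k A]
    extends ComodAlg k H A where
  antipode_bij : Function.Bijective (HopfAlgebra.antipode (R := k) (A := H))
  galois : Function.Bijective (chiQ k toComodAlg)
  ff : IsFaithfullyFlatOver k toComodAlg.coinv


/-- An (ℕ-graded) differential graded algebra over `k`. -/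
structure GDA where
  Ω : Type
  [ring : Ring Ω]
  [alg : Algebra k Ω]
  gr : ℕ → Submodule k Ω
  [graded : GradedAlgebra gr]
  d : Ω →ₗ[k] Ω
  d_d : ∀ x, d (d x) = 0
  d_mem : ∀ n, ∀ x ∈ gr n, d x ∈ gr (n + 1)
  leibniz : ∀ n, ∀ x ∈ gr n, ∀ y, d (x * y) = d x * y + ((-1 : k) ^ n) • (x * d y)

attribute [instance] GDA.ring GDA.alg GDA.graded

/-- A differential calculus on the algebra `A`: a DGA with `Ω⁰ = A` which is
generated in the sense `Ωⁿ = span { a⁰ da¹ ∧ ⋯ ∧ daⁿ }`. -/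
structure DC (A : Type) [Ring A] [Algebra k A] extends GDA k where
  ι : A →ₐ[k] Ω
  ι_inj : Function.Injective ι
  gr_zero : gr 0 = LinearMap.range ι.toLinearMap
  gr_succ : ∀ n : ℕ, gr (n + 1) = Submodule.span k
    {x | ∃ (a : A) (f : Fin (n + 1) → A),
      x = ι a * (List.ofFn fun i => d (ι (f i))).prod}

variable {k}

/-- The Koszul sign operator `J x = (-1)^{|x|} x`. -/
def GDA.J (D : GDA k) : D.Ω →ₗ[k] D.Ω :=
  (DirectSum.toModule k ℕ D.Ω fun n => ((-1 : k) ^ n) • (D.gr n).subtype) ∘ₗ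
    (DirectSum.decomposeLinearEquiv D.gr).toLinearMap

/-- The Koszul braiding flip `x ⊗ y ↦ (-1)^{|x||y|} y ⊗ x`. -/
def koszulFlip (D E : GDA k) : D.Ω ⊗[k] E.Ω →ₗ[k] E.Ω ⊗[k] D.Ω :=
  (DirectSum.toModule k ℕ (E.Ω ⊗[k] D.Ω) fun n =>
      (TensorProduct.comm k D.Ω E.Ω).toLinearMap ∘ₗ
        TensorProduct.map (D.gr n).subtype (E.J ^ n)) ∘ₗ
    (TensorProduct.directSumLeft k k (fun n => D.gr n) E.Ω).toLinearMap ∘ₗ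
    LinearMap.rTensor E.Ω (DirectSum.decomposeLinearEquiv D.gr).toLinearMap

/-- Multiplication of the graded (Koszul-signed) tensor product algebra
`Ω(D) ⊗ Ω(E)`: `(x ⊗ h)(y ⊗ g) = (-1)^{|h||y|} (xy) ⊗ (hg)`. -/
def gmulT (D E : GDA k) :
    (D.Ω ⊗[k] E.Ω) ⊗[k] (D.Ω ⊗[k] E.Ω) →ₗ[k] D.Ω ⊗[k] E.Ω :=
  TensorProduct.map (LinearMap.mul' k D.Ω) (LinearMap.mul' k E.Ω) ∘ₗ
    (TensorProduct.assoc k D.Ω D.Ω (E.Ω ⊗[k] E.Ω)).symm.toLinearMap ∘ₗ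
    LinearMap.lTensor D.Ω (TensorProduct.assoc k D.Ω E.Ω E.Ω).toLinearMap ∘ₗ
    LinearMap.lTensor D.Ω (LinearMap.rTensor E.Ω (koszulFlip E D)) ∘ₗ
    LinearMap.lTensor D.Ω (TensorProduct.assoc k E.Ω D.Ω E.Ω).symm.toLinearMap ∘ₗ
    (TensorProduct.assoc k D.Ω E.Ω (D.Ω ⊗[k] E.Ω)).toLinearMap

/-- The differential of the graded tensor product:
`d⊗(x ⊗ y) = dx ⊗ y + (-1)^{|x|} x ⊗ dy`. -/
def dT (D E : GDA k) : D.Ω ⊗[k] E.Ω →ₗ[k] D.Ω ⊗[k] E.Ω :=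
  LinearMap.rTensor E.Ω D.d + TensorProduct.map D.J E.d

/-- Projection of a differential calculus onto its degree-zero part `A`. -/
def DC.p0 {A : Type} [Ring A] [Algebra k A] (D : DC k A) : D.Ω →ₗ[k] A :=
  (LinearEquiv.ofInjective D.ι.toLinearMap D.ι_inj).symm.toLinearMap ∘ₗ
    (LinearEquiv.ofEq _ _ D.gr_zero).toLinearMap ∘ₗ
    DirectSum.component k ℕ (fun n => D.gr n) 0 ∘ₗ
    (DirectSum.decomposeLinearEquiv D.gr).toLinearMap


variable (k)

/-! ### First order differential calculi -/

/-- A first order differential calculus `(Ω¹(A), d)` on `A`, realized on the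
`A`-bimodule `V`. -/
structure FODC (A V : Type) [Ring A] [Algebra k A] [AddCommGroup V] [Module k V] where
  lact : A →ₗ[k] V →ₗ[k] V
  ract : A →ₗ[k] V →ₗ[k] V
  lact_one : lact 1 = LinearMap.id
  lact_mul : ∀ a b : A, lact (a * b) = lact a ∘ₗ lact b
  ract_one : ract 1 = LinearMap.id
  ract_mul : ∀ a b : A, ract (a * b) = ract b ∘ₗ ract a
  lr_comm : ∀ (a b : A) (v : V), lact a (ract b v) = ract b (lact a v)
  d : A →ₗ[k] V
  leibniz : ∀ a b : A, d (a * b) = lact a (d b) + ract b (d a)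
  span_eq : Submodule.span k {x : V | ∃ a b : A, x = lact a (d b)} = ⊤

/-- Auxiliary action of `A ⊗ H` on `V ⊗ H`:
`(a ⊗ h) ⋅ (v ⊗ g) = (act a v) ⊗ (mulH h g)`. -/
def actT {A H V : Type} [AddCommGroup A] [Module k A] [AddCommGroup H] [Module k H]
    [AddCommGroup V] [Module k V]
    (act : A →ₗ[k] V →ₗ[k] V) (mulH : H →ₗ[k] H →ₗ[k] H) :
    A ⊗[k] H →ₗ[k] (V ⊗[k] H) →ₗ[k] V ⊗[k] H :=
  TensorProduct.lift ((TensorProduct.mapBilinear (RingHom.id k) V H V H).compl₁₂ act mulH)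

/-- Auxiliary action of `H ⊗ A` on `H ⊗ V`:
`(h ⊗ a) ⋅ (g ⊗ v) = (mulH h g) ⊗ (act a v)`. -/
def actTL {A H V : Type} [AddCommGroup A] [Module k A] [AddCommGroup H] [Module k H]
    [AddCommGroup V] [Module k V]
    (act : A →ₗ[k] V →ₗ[k] V) (mulH : H →ₗ[k] H →ₗ[k] H) :
    H ⊗[k] A →ₗ[k] (H ⊗[k] V) →ₗ[k] H ⊗[k] V :=
  TensorProduct.lift ((TensorProduct.mapBilinear (RingHom.id k) H V H V).compl₁₂ mulH act)

section Covariant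
variable {H A : Type} [Ring H] [Bialgebra k H] [Ring A] [Algebra k A]

/-- A right `H`-covariant FODC on the right `H`-comodule algebra `A`. -/
structure RCovFODC (c : ComodAlg k H A) (V : Type) [AddCommGroup V] [Module k V]
    extends FODC k A V where
  ρV : V →ₗ[k] V ⊗[k] H
  ρV_counit : ∀ v, TensorProduct.rid k V
    (LinearMap.lTensor V (Coalgebra.counit (R := k) (A := H)) (ρV v)) = v
  ρV_coassoc : ∀ v, TensorProduct.assoc k V H H (LinearMap.rTensor H ρV (ρV v))
    = LinearMap.lTensor V (Coalgebra.comul (R := k) (A := H)) (ρV v)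
  ρV_d : ∀ a : A, ρV (d a) = LinearMap.rTensor H d (c.ρ a)
  ρV_l : ∀ (a : A) (v : V),
    ρV (lact a v) = actT k lact (LinearMap.mul k H) (c.ρ a) (ρV v)
  ρV_r : ∀ (a : A) (v : V),
    ρV (ract a v) = actT k ract ((LinearMap.mul k H).flip) (c.ρ a) (ρV v)

/-- A left `H`-covariant FODC on the Hopf algebra `H` itself. -/
structure LCovFODC (V : Type) [AddCommGroup V] [Module k V]
    extends FODC k H V where
  lam : V →ₗ[k] H ⊗[k] V
  lam_counit : ∀ v, TensorProduct.lid k V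
    (LinearMap.rTensor V (Coalgebra.counit (R := k) (A := H)) (lam v)) = v
  lam_coassoc : ∀ v, (TensorProduct.assoc k H H V).symm
      (LinearMap.lTensor H lam (lam v))
    = LinearMap.rTensor V (Coalgebra.comul (R := k) (A := H)) (lam v)
  lam_d : ∀ h : H, lam (d h) = LinearMap.lTensor H d (Coalgebra.comul (R := k) h)
  lam_l : ∀ (h : H) (v : V), lam (lact h v)
    = actTL k lact (LinearMap.mul k H) (Coalgebra.comul (R := k) h) (lam v)
  lam_r : ∀ (h : H) (v : V), lam (ract h v)
    = actTL k ract ((LinearMap.mul k H).flip) (Coalgebra.comul (R := k) h) (lam v)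

/-- The right coaction data making a left covariant FODC on `H` bicovariant. -/
structure BicovStruct {V : Type} [AddCommGroup V] [Module k V]
    (L : LCovFODC k (H := H) V) where
  ρV : V →ₗ[k] V ⊗[k] H
  ρV_counit : ∀ v, TensorProduct.rid k V
    (LinearMap.lTensor V (Coalgebra.counit (R := k) (A := H)) (ρV v)) = v
  ρV_coassoc : ∀ v, TensorProduct.assoc k V H H (LinearMap.rTensor H ρV (ρV v))
    = LinearMap.lTensor V (Coalgebra.comul (R := k) (A := H)) (ρV v)
  ρV_d : ∀ h : H, ρV (L.d h) = LinearMap.rTensor H L.d (Coalgebra.comul (R := k) h)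
  ρV_l : ∀ (h : H) (v : V),
    ρV (L.lact h v) = actT k L.lact (LinearMap.mul k H) (Coalgebra.comul (R := k) h) (ρV v)
  ρV_r : ∀ (h : H) (v : V),
    ρV (L.ract h v) = actT k L.ract ((LinearMap.mul k H).flip) (Coalgebra.comul (R := k) h) (ρV v)
  bicomod : ∀ v, LinearMap.lTensor H ρV (L.lam v)
    = TensorProduct.assoc k H V H (LinearMap.rTensor H L.lam (ρV v))

end Covariant

/-! ### Maximal prolongations -/

section MaxProl
variable {k}
variable {A : Type} [Ring A] [Algebra k A]

/-- A realization of a DC as an extension of a given FODC. -/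
structure ExtendsFODC {V : Type} [AddCommGroup V] [Module k V]
    (D : DC k A) (F : FODC k A V) where
  j : V →ₗ[k] D.Ω
  j_inj : Function.Injective j
  j_range : LinearMap.range j = D.gr 1
  j_d : ∀ a : A, j (F.d a) = D.d (D.ι a)
  j_l : ∀ (a : A) (v : V), j (F.lact a v) = D.ι a * j v
  j_r : ∀ (a : A) (v : V), j (F.ract a v) = j v * D.ι a

/-- `D` is the maximal prolongation of the FODC `F`: it extends `F` and every
other extension is a quotient of it. -/
def IsMaxProlongation {V : Type} [AddCommGroup V] [Module k V]
    (D : DC k A) (F : FODC k A V) : Prop :=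
  Nonempty (ExtendsFODC D F) ∧
  ∀ (D' : DC k A) (e : ExtendsFODC D F) (e' : ExtendsFODC D' F),
    ∃ φ : D.Ω →ₐ[k] D'.Ω, Function.Surjective φ ∧
      (∀ a : A, φ (D.ι a) = D'.ι a) ∧
      (∀ x, φ (D.d x) = D'.d (φ x)) ∧
      (∀ n, ∀ x ∈ D.gr n, φ x ∈ D'.gr n) ∧
      (∀ v : V, φ (e.j v) = e'.j v)

end MaxProl

/-! ### The adjoint coaction and graded Hopf calculi -/

section HopfSide
variable {k}
variable {H : Type} [Ring H] [HopfAlgebra k H]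

/-- The (right) adjoint coaction `Ad(h) = h₂ ⊗ S(h₁) h₃`. -/
def AdMap : H →ₗ[k] H ⊗[k] H :=
  LinearMap.lTensor H (LinearMap.mul' k H) ∘ₗ
    (TensorProduct.assoc k H H H).toLinearMap ∘ₗ
    LinearMap.rTensor H ((TensorProduct.comm k H H).toLinearMap ∘ₗ
      LinearMap.rTensor H (HopfAlgebra.antipode (R := k))) ∘ₗ
    LinearMap.rTensor H (Coalgebra.comul (R := k)) ∘ₗ
    Coalgebra.comul (R := k)

variable (k) in
/-- A differential calculus on `H` which is a differential graded Hopf algebra,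
as is the case for the maximal prolongation of a bicovariant FODC. -/
structure DGHopf extends DC k H where
  Δg : Ω →ₗ[k] Ω ⊗[k] Ω
  εg : Ω →ₗ[k] k
  Sg : Ω →ₗ[k] Ω
  Δg_one : Δg 1 = 1 ⊗ₜ[k] 1
  Δg_mul : ∀ x y : Ω, Δg (x * y) = gmulT toGDA toGDA (Δg x ⊗ₜ[k] Δg y)
  Δg_d : ∀ x : Ω, Δg (d x) = dT toGDA toGDA (Δg x)
  Δg_zero : ∀ h : H, Δg (ι h)
    = TensorProduct.map ι.toLinearMap ι.toLinearMap (Coalgebra.comul (R := k) h)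
  Δg_coassoc : ∀ x : Ω, TensorProduct.assoc k Ω Ω Ω (LinearMap.rTensor Ω Δg (Δg x))
    = LinearMap.lTensor Ω Δg (Δg x)
  Δg_counit_l : ∀ x : Ω, TensorProduct.lid k Ω (LinearMap.rTensor Ω εg (Δg x)) = x
  Δg_counit_r : ∀ x : Ω, TensorProduct.rid k Ω (LinearMap.lTensor Ω εg (Δg x)) = x
  εg_zero : ∀ h : H, εg (ι h) = Coalgebra.counit (R := k) h
  εg_pos : ∀ n, ∀ x ∈ gr (n + 1), εg x = 0
  Sg_antipode_l : ∀ x : Ω,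
    LinearMap.mul' k Ω (TensorProduct.map Sg LinearMap.id (Δg x)) = algebraMap k Ω (εg x)
  Sg_antipode_r : ∀ x : Ω,
    LinearMap.mul' k Ω (TensorProduct.map LinearMap.id Sg (Δg x)) = algebraMap k Ω (εg x)
  Sg_zero : ∀ h : H, Sg (ι h) = ι (HopfAlgebra.antipode (R := k) h)
  Sg_d : ∀ x : Ω, Sg (d x) = d (Sg x)
  Δg_grade : ∀ n, ∀ x ∈ gr n, Δg x ∈
    ⨆ p : {p : ℕ × ℕ // p.1 + p.2 = n},
      LinearMap.range (TensorProduct.map (gr p.1.1).subtype (gr p.1.2).subtype)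

namespace DGHopf

variable (D : DGHopf k (H := H))

/-- The left coaction of `H` on `Ω•(H)`, i.e. the degree `(0,•)` part of `Δg`. -/
def lamG : D.Ω →ₗ[k] H ⊗[k] D.Ω :=
  TensorProduct.map D.p0 LinearMap.id ∘ₗ D.Δg

/-- The left coinvariant forms `Λ• ⊆ Ω•(H)`. -/
def lamSub : Submodule k D.Ω :=
  LinearMap.ker (D.lamG - TensorProduct.mk k H D.Ω 1)

/-- The left coinvariant one-forms `Λ¹`. -/
def lam1 : Submodule k D.Ω := D.lamSub ⊓ D.gr 1

/-- The (quantum) Cartan–Maurer form `ϖ(h) = S(h₁) d(h₂)`, extended to `H`. -/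
def varpi : H →ₗ[k] D.Ω :=
  TensorProduct.lift
    (((LinearMap.mul k D.Ω ∘ₗ D.ι.toLinearMap ∘ₗ
        (HopfAlgebra.antipode (R := k))).compl₂ (D.d ∘ₗ D.ι.toLinearMap))) ∘ₗ
    Coalgebra.comul (R := k)

/-- The graded adjoint coaction
`Ad•(ω) = (-1)^{|ω₁||ω₂|} ω₂ ⊗ S•(ω₁) ∧ ω₃`. -/
def AdG : D.Ω →ₗ[k] D.Ω ⊗[k] D.Ω :=
  LinearMap.lTensor D.Ω (LinearMap.mul' k D.Ω ∘ₗ LinearMap.rTensor D.Ω D.Sg) ∘ₗ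
    (TensorProduct.assoc k D.Ω D.Ω D.Ω).toLinearMap ∘ₗ
    LinearMap.rTensor D.Ω (koszulFlip D.toGDA D.toGDA) ∘ₗ
    LinearMap.rTensor D.Ω D.Δg ∘ₗ D.Δg

end DGHopf
end HopfSide

/-! ### Complete calculi -/

section Complete
variable {k}
variable {H A : Type} [Ring H] [HopfAlgebra k H] [Ring A] [Algebra k A]

variable (k) in
/-- A complete calculus: the coaction of a comodule algebra extends to a
morphism of differential graded algebras `Ω•(A) → Ω•(A) ⊗ Ω•(H)`. -/
structure Complete (c : ComodAlg k H A) (DA : DC k A) (DH : DGHopf k (H := H)) where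
  Δc : DA.Ω →ₗ[k] DA.Ω ⊗[k] DH.Ω
  Δc_one : Δc 1 = 1 ⊗ₜ[k] 1
  Δc_mul : ∀ x y : DA.Ω, Δc (x * y) = gmulT DA.toGDA DH.toGDA (Δc x ⊗ₜ[k] Δc y)
  Δc_d : ∀ x : DA.Ω, Δc (DA.d x) = dT DA.toGDA DH.toGDA (Δc x)
  Δc_zero : ∀ a : A, Δc (DA.ι a)
    = TensorProduct.map DA.ι.toLinearMap DH.ι.toLinearMap (c.ρ a)
  Δc_grade : ∀ n, ∀ x ∈ DA.gr n, Δc x ∈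
    ⨆ p : {p : ℕ × ℕ // p.1 + p.2 = n},
      LinearMap.range (TensorProduct.map (DA.gr p.1.1).subtype (DH.gr p.1.2).subtype)

namespace Complete

variable {c : ComodAlg k H A} {DA : DC k A} {DH : DGHopf k (H := H)}
variable (E : Complete k c DA DH)

/-- The first order part of the extended coaction: a right `H`-coaction on `Ω•(A)`. -/
def ρΩ : DA.Ω →ₗ[k] DA.Ω ⊗[k] H :=
  LinearMap.lTensor DA.Ω DH.p0 ∘ₗ E.Δc

/-- The basic forms `Ω•(B) = Ω•(A)^{co Ω•(H)}`. -/
def basic : Submodule k DA.Ω :=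
  LinearMap.ker (E.Δc - (TensorProduct.mk k DA.Ω DH.Ω).flip 1)

/-- The horizontal forms `hor• = (Δ•)⁻¹(Ω•(A) ⊗ H)`. -/
def hor : Submodule k DA.Ω :=
  Submodule.comap E.Δc (LinearMap.range (LinearMap.lTensor DA.Ω DH.ι.toLinearMap))

end Complete

/-- The map `κ : a ⊗ ω ↦ a₀ ⊗ S(a₁) ω`. -/
def kappa (c : ComodAlg k H A) (DH : DGHopf k (H := H)) :
    A ⊗[k] DH.Ω →ₗ[k] A ⊗[k] DH.Ω :=
  LinearMap.lTensor A (LinearMap.mul' k DH.Ω ∘ₗ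
      LinearMap.rTensor DH.Ω (DH.ι.toLinearMap ∘ₗ HopfAlgebra.antipode (R := k))) ∘ₗ
    (TensorProduct.assoc k A H DH.Ω).toLinearMap ∘ₗ
    LinearMap.rTensor DH.Ω c.ρ

namespace Complete
variable {c : ComodAlg k H A} {DA : DC k A} {DH : DGHopf k (H := H)}
variable (E : Complete k c DA DH)

/-- The vertical projection `π_v : Ω•(A) → A ⊗ Λ• ⊆ A ⊗ Ω•(H)`. -/
def piv : DA.Ω →ₗ[k] A ⊗[k] DH.Ω :=
  kappa c DH ∘ₗ TensorProduct.map DA.p0 LinearMap.id ∘ₗ E.Δc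

end Complete
end Complete

/-! ### The Đurđević braiding via the Galois map -/

section Durd
variable {k}
variable {H A : Type} [Ring H] [HopfAlgebra k H] [Ring A] [Algebra k A]

/-- The map `a ⊗ c ↦ a₀ c ⊗ a₁`, i.e. `χ ∘ σ` for the Đurđević braiding. -/
def durdGalois (c : ComodAlg k H A) : A ⊗[k] A →ₗ[k] A ⊗[k] H :=
  LinearMap.rTensor H (LinearMap.mul' k A) ∘ₗ
    (TensorProduct.assoc k A A H).symm.toLinearMap ∘ₗ
    LinearMap.lTensor A (TensorProduct.comm k H A).toLinearMap ∘ₗ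
    (TensorProduct.assoc k A H A).toLinearMap ∘ₗ
    LinearMap.rTensor A c.ρ

/-- The graded analogue `ω ⊗ η ↦ (-1)^{|η||ω₁|} (ω₀ ∧ η) ⊗ ω₁`, i.e.
`χ• ∘ σ•` for the extended Đurđević braiding. -/
def durdGaloisG {c : ComodAlg k H A} {DA : DC k A} {DH : DGHopf k (H := H)}
    (E : Complete k c DA DH) : DA.Ω ⊗[k] DA.Ω →ₗ[k] DA.Ω ⊗[k] DH.Ω :=
  LinearMap.rTensor DH.Ω (LinearMap.mul' k DA.Ω) ∘ₗ
    (TensorProduct.assoc k DA.Ω DA.Ω DH.Ω).symm.toLinearMap ∘ₗ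
    LinearMap.lTensor DA.Ω (koszulFlip DH.toGDA DA.toGDA) ∘ₗ
    (TensorProduct.assoc k DA.Ω DH.Ω DA.Ω).toLinearMap ∘ₗ
    LinearMap.rTensor DA.Ω E.Δc

end Durd

/-! ### Gauge transformations and connections -/

section Gauge
variable {k}
variable {H A : Type} [Ring H] [HopfAlgebra k H] [Ring A] [Algebra k A]

/-- A gauge transformation: unital, convolution invertible, and colinear with
respect to the adjoint coaction. -/
def IsGauge (c : ComodAlg k H A) (f : H →ₗ[k] A) : Prop :=
  IsConvInvertible k f ∧ f 1 = 1 ∧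
    ∀ h : H, c.ρ (f h) = LinearMap.rTensor H f (AdMap h)

/-- A vertical automorphism: a unital left `B`-linear right `H`-colinear
bijection of `A`. -/
def IsVertAut (c : ComodAlg k H A) (F : A →ₗ[k] A) : Prop :=
  Function.Bijective F ∧ (∀ b ∈ c.coinv, ∀ a, F (b * a) = b * F a) ∧ F 1 = 1 ∧
    ∀ a, c.ρ (F a) = LinearMap.rTensor H F (c.ρ a)

variable {DA : DC k A} {DH : DGHopf k (H := H)}

/-- Convolution product with respect to the graded coproduct. -/
def convG (DH : DGHopf k (H := H)) {P : Type} [Ring P] [Algebra k P]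
    (f g : DH.Ω →ₗ[k] P) : DH.Ω →ₗ[k] P :=
  LinearMap.mul' k P ∘ₗ TensorProduct.map f g ∘ₗ DH.Δg

/-- Convolution unit with respect to the graded counit. -/
def convGUnit (DH : DGHopf k (H := H)) {P : Type} [Ring P] [Algebra k P] :
    DH.Ω →ₗ[k] P :=
  Algebra.linearMap k P ∘ₗ DH.εg

/-- A map `Ω•(H) → Ω•(A)` of degree zero. -/
def IsDeg0 (DH : DGHopf k (H := H)) (DA : DC k A) (f : DH.Ω →ₗ[k] DA.Ω) : Prop :=
  ∀ n, ∀ x ∈ DH.gr n, f x ∈ DA.gr n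

/-- The degree-zero component `f⁰ : H → A` of a degree-zero map. -/
def deg0Part (DH : DGHopf k (H := H)) (DA : DC k A) (f : DH.Ω →ₗ[k] DA.Ω) :
    H →ₗ[k] A :=
  DA.p0 ∘ₗ f ∘ₗ DH.ι.toLinearMap

section WithComplete
variable {c : ComodAlg k H A} (E : Complete k c DA DH)

/-- A graded gauge transformation. -/
def IsGradedGauge (f : DH.Ω →ₗ[k] DA.Ω) : Prop :=
  IsDeg0 DH DA f ∧
  (∃ g : DH.Ω →ₗ[k] DA.Ω, IsDeg0 DH DA g ∧
      convG DH f g = convGUnit DH ∧ convG DH g f = convGUnit DH) ∧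
  f 1 = 1 ∧
  ∀ ω, E.Δc (f ω) = LinearMap.rTensor DH.Ω f (DH.AdG ω)

/-- A graded vertical automorphism. -/
def IsGradedVertAut (F : DA.Ω →ₗ[k] DA.Ω) : Prop :=
  (∀ n, ∀ x ∈ DA.gr n, F x ∈ DA.gr n) ∧ Function.Bijective F ∧
  (∀ β ∈ E.basic, ∀ x, F (β * x) = β * F x) ∧ F 1 = 1 ∧
  ∀ x, E.Δc (F x) = LinearMap.rTensor DH.Ω F (E.Δc x)

/-- The right hand side `h ↦ s(ϖ(π_ε(h₂))) ⊗ S(h₁)h₃` of the colinearity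
condition for connection 1-forms. -/
def connRHSg (s : DH.Ω →ₗ[k] DA.Ω) : H →ₗ[k] DA.Ω ⊗[k] H :=
  TensorProduct.map (s ∘ₗ DH.varpi)
      (LinearMap.mul' k H ∘ₗ LinearMap.rTensor H (HopfAlgebra.antipode (R := k))) ∘ₗ
    (TensorProduct.assoc k H H H).toLinearMap ∘ₗ
    LinearMap.rTensor H (TensorProduct.comm k H H).toLinearMap ∘ₗ
    LinearMap.rTensor H (Coalgebra.comul (R := k)) ∘ₗ
    Coalgebra.comul (R := k)

/-- A connection 1-form on a quantum principal bundle with complete calculus. -/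
def IsConnForm (s : DH.Ω →ₗ[k] DA.Ω) : Prop :=
  (∀ θ ∈ DH.lam1, s θ ∈ DA.gr 1) ∧
  (∀ h : H, E.ρΩ (s (DH.varpi h)) = connRHSg s h) ∧
  (∀ θ ∈ DH.lam1, E.piv (s θ) = (1 : A) ⊗ₜ[k] θ)

/-- The curvature `R_s(h) = d s(ϖ(h)) + s(ϖ(π_ε(h₁))) ∧ s(ϖ(π_ε(h₂)))`. -/
def curvature (s : DH.Ω →ₗ[k] DA.Ω) : H →ₗ[k] DA.Ω :=
  DA.d ∘ₗ s ∘ₗ DH.varpi +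
    LinearMap.mul' k DA.Ω ∘ₗ
      TensorProduct.map (s ∘ₗ DH.varpi) (s ∘ₗ DH.varpi) ∘ₗ Coalgebra.comul (R := k)

/-- The `Ω•(B)`-balancing relations in `Ω•(A) ⊗ Ω•(A)`. -/
def basicBalancer : Submodule k (DA.Ω ⊗[k] DA.Ω) :=
  balQ k (E.basic : Set DA.Ω)

/-- The graded Galois map `χ• : ω ⊗ η ↦ ω ∧ η₍₀₎ ⊗ η₍₁₎` before descending to
`Ω•(A) ⊗_{Ω•(B)} Ω•(A)`. -/
def chi0g : DA.Ω ⊗[k] DA.Ω →ₗ[k] DA.Ω ⊗[k] DH.Ω :=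
  gmulT DA.toGDA DH.toGDA ∘ₗ
    TensorProduct.map ((TensorProduct.mk k DA.Ω DH.Ω).flip 1) E.Δc

end WithComplete
end Gauge

/-! ### First-order machinery -/

section FirstOrder
variable {k}
variable {H A : Type} [Ring H] [HopfAlgebra k H] [Ring A] [Algebra k A]
variable {VA VH : Type} [AddCommGroup VA] [Module k VA] [AddCommGroup VH] [Module k VH]
variable {c : ComodAlg k H A}

/-- The left coinvariant elements `Λ¹` of a left covariant FODC on `H`. -/
def Lam1 (L : LCovFODC k (H := H) VH) : Submodule k VH :=
  LinearMap.ker (L.lam - TensorProduct.mk k H VH 1)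

/-- The Cartan–Maurer form `ϖ(h) = S(h₁) ⋅ d(h₂)` of a left covariant FODC. -/
def varpi1 (L : LCovFODC k (H := H) VH) : H →ₗ[k] VH :=
  TensorProduct.lift
    ((L.lact ∘ₗ HopfAlgebra.antipode (R := k)).compl₂ L.d) ∘ₗ
    Coalgebra.comul (R := k)

/-- The map `a' ↦ a'₀ ⊗ S(a'₁) ⋅ d(a'₂)`. -/
def nuMap (c : ComodAlg k H A) (L : LCovFODC k (H := H) VH) : A →ₗ[k] A ⊗[k] VH :=
  LinearMap.lTensor A
      (TensorProduct.lift ((L.lact ∘ₗ HopfAlgebra.antipode (R := k)).compl₂ L.d)) ∘ₗ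
    (TensorProduct.assoc k A H H).toLinearMap ∘ₗ
    LinearMap.rTensor H c.ρ ∘ₗ c.ρ

/-- A first order complete calculus: the vertical projection
`π_v(a ⋅ d a') = a a'₀ ⊗ S(a'₁) d a'₂` is well defined. -/
structure FOComplete (c : ComodAlg k H A) (FA : RCovFODC k c VA)
    (LH : LCovFODC k (H := H) VH) where
  pv : VA →ₗ[k] A ⊗[k] VH
  pv_eq : ∀ a a' : A, pv (FA.lact a (FA.d a'))
    = LinearMap.rTensor VH (LinearMap.mulLeft k a) (nuMap c LH a')

/-- Colinearity right hand side for first-order connection forms. -/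
def connRHS1 (LH : LCovFODC k (H := H) VH) (_FA : RCovFODC k c VA)
    (s : VH →ₗ[k] VA) : H →ₗ[k] VA ⊗[k] H :=
  TensorProduct.map (s ∘ₗ varpi1 LH)
      (LinearMap.mul' k H ∘ₗ LinearMap.rTensor H (HopfAlgebra.antipode (R := k))) ∘ₗ
    (TensorProduct.assoc k H H H).toLinearMap ∘ₗ
    LinearMap.rTensor H (TensorProduct.comm k H H).toLinearMap ∘ₗ
    LinearMap.rTensor H (Coalgebra.comul (R := k)) ∘ₗ
    Coalgebra.comul (R := k)

/-- A connection 1-form for a first order complete calculus. -/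
def IsConnForm1 {c : ComodAlg k H A} (FA : RCovFODC k c VA)
    (LH : LCovFODC k (H := H) VH) (E : FOComplete c FA LH)
    (s : VH →ₗ[k] VA) : Prop :=
  (∀ h : H, FA.ρV (s (varpi1 LH h)) = connRHS1 LH FA s h) ∧
  (∀ θ ∈ Lam1 LH, E.pv (s θ) = (1 : A) ⊗ₜ[k] θ)

end FirstOrder

/-! ### The regular comodule algebra and bicovariant prolongations -/

section Reg
variable {k}
variable (H : Type) [Ring H] [HopfAlgebra k H]

variable (k) in
/-- `H` as a right comodule algebra over itself via the comultiplication. -/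
def regCA : ComodAlg k H H where
  ρ := Coalgebra.comul
  ρ_one := Bialgebra.comul_one
  ρ_mul := fun a b => Bialgebra.comul_mul a b
  counit_ρ := by
    intro a
    have h := LinearMap.congr_fun
      (Coalgebra.lTensor_counit_comp_comul (R := k) (A := H)) a
    simp only [LinearMap.comp_apply] at h
    rw [h]
    simp
  coassoc_ρ := by
    intro a
    have h := LinearMap.congr_fun (Coalgebra.coassoc (R := k) (A := H)) a
    simp only [LinearMap.comp_apply, LinearEquiv.coe_coe] at h
    exact h

variable {H} in
/-- `D` is the maximal prolongation of some bicovariant FODC on `H`. -/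
def DGHopf.IsMaxProlOfBicov (D : DGHopf k (H := H)) : Prop :=
  ∃ (V : Type) (_ : AddCommGroup V) (_ : Module k V) (L : LCovFODC k (H := H) V),
    Nonempty (BicovStruct k L) ∧ IsMaxProlongation D.toDC L.toFODC

end Reg

/-! ## The noncommutative algebraic 2-torus -/

/-- The quantum principal bundle of the noncommutative algebraic 2-torus
`A = O_θ(T²) = ℂ[u,v,u⁻¹,v⁻¹]/⟨vu - e^{iθ}uv⟩` over `H = O(U(1)) = ℂ[t,t⁻¹]`,
together with its first order complete differential calculus
`Ω¹(A) = span_A{du, dv}`, `Ω¹(H) = span_H{dt}`. -/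
structure TorusBundle where
  H : Type
  [ringH : CommRing H]
  [hopfH : HopfAlgebra ℂ H]
  A : Type
  [ringA : Ring A]
  [algA : Algebra ℂ A]
  θ : ℝ
  θ_ne : θ ≠ 0
  u : A
  v : A
  u' : A
  v' : A
  uu' : u * u' = 1
  u'u : u' * u = 1
  vv' : v * v' = 1
  v'v : v' * v = 1
  rel : v * u = Complex.exp (θ * Complex.I) • (u * v)
  basisA : Module.Basis (ℤ × ℤ) ℂ A
  basisA_eq : ∀ m n : ℤ, basisA (m, n)
    = (((⟨u, u', uu', u'u⟩ : Aˣ) ^ m : Aˣ) : A) * (((⟨v, v', vv', v'v⟩ : Aˣ) ^ n : Aˣ) : A)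
  t : Hˣ
  grouplike_t : Coalgebra.comul (R := ℂ) ((t : Hˣ) : H) = ((t : Hˣ) : H) ⊗ₜ[ℂ] ((t : Hˣ) : H)
  counit_t : Coalgebra.counit (R := ℂ) ((t : Hˣ) : H) = 1
  basisH : Module.Basis ℤ ℂ H
  basisH_eq : ∀ m : ℤ, basisH m = ((t ^ m : Hˣ) : H)
  ca : ComodAlg ℂ H A
  ρu : ca.ρ u = u ⊗ₜ[ℂ] ((t : Hˣ) : H)
  ρv : ca.ρ v = v ⊗ₜ[ℂ] ((t⁻¹ : Hˣ) : H)
  galois : Function.Bijective (chiQ ℂ ca)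
  ff : IsFaithfullyFlatOver ℂ ca.coinv
  V1 : Type
  [acgV1 : AddCommGroup V1]
  [modV1 : Module ℂ V1]
  FA : RCovFODC ℂ ca V1
  free1 : ∀ x : V1, ∃! p : A × A, x = FA.lact p.1 (FA.d u) + FA.lact p.2 (FA.d v)
  comm_du_v : FA.ract v (FA.d u) = Complex.exp (-(θ * Complex.I)) • FA.lact v (FA.d u)
  comm_dv_u : FA.ract u (FA.d v) = Complex.exp (θ * Complex.I) • FA.lact u (FA.d v)
  comm_du_u : FA.ract u (FA.d u) = FA.lact u (FA.d u)
  comm_dv_v : FA.ract v (FA.d v) = FA.lact v (FA.d v)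
  VH : Type
  [acgVH : AddCommGroup VH]
  [modVH : Module ℂ VH]
  LH : LCovFODC ℂ (H := H) VH
  bic : BicovStruct ℂ LH
  freeH : ∀ x : VH, ∃! q : H, x = LH.lact q (LH.d ((t : Hˣ) : H))
  lam1_span : Lam1 LH = Submodule.span ℂ {varpi1 LH ((t : Hˣ) : H)}
  FO : FOComplete ca FA LH

attribute [instance] TorusBundle.ringH TorusBundle.hopfH TorusBundle.ringA
  TorusBundle.algA TorusBundle.acgV1 TorusBundle.modV1 TorusBundle.acgVH
  TorusBundle.modVH

/-! ## Statement 19: flatness of connections on the noncommutative 2-torus -/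

/-- The noncommutative algebraic 2-torus bundle together with its second order
calculus `Ω²(A) = span_A{du ∧ dv}`. -/
structure TorusBundle2 extends TorusBundle where
  W2 : Type
  [acgW2 : AddCommGroup W2]
  [modW2 : Module ℂ W2]
  wedge : V1 →ₗ[ℂ] V1 →ₗ[ℂ] W2
  d1 : V1 →ₗ[ℂ] W2
  lact2 : A →ₗ[ℂ] W2 →ₗ[ℂ] W2
  d1_d : ∀ a : A, d1 (FA.d a) = 0
  d1_leibniz : ∀ (a : A) (x : V1),
    d1 (FA.lact a x) = wedge (FA.d a) x + lact2 a (d1 x)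
  wedge_skew : wedge (FA.d u) (FA.d v)
    = - (Complex.exp (-(θ * Complex.I)) • wedge (FA.d v) (FA.d u))
  wedge_lact : ∀ (a : A) (x y : V1), wedge (FA.lact a x) y = lact2 a (wedge x y)
  wedge_mid : ∀ (a : A) (x y : V1), wedge (FA.ract a x) y = wedge x (FA.lact a y)
  w2_span : Submodule.span ℂ
    {w : W2 | ∃ a : A, w = lact2 a (wedge (FA.d u) (FA.d v))} = ⊤

attribute [instance] TorusBundle2.acgW2 TorusBundle2.modW2

/-! ### Auxiliary generic lemmas -/

section FODCAux

variable {K : Type} [Field K] {A V : Type} [Ring A] [Algebra K A]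
  [AddCommGroup V] [Module K V] (F : FODC K A V)

lemma FODC.lact_mul_apply (y z : A) (x : V) :
    F.lact (y * z) x = F.lact y (F.lact z x) := by
  rw [F.lact_mul]; rfl

lemma FODC.ract_mul_apply (y z : A) (x : V) :
    F.ract (y * z) x = F.ract z (F.ract y x) := by
  rw [F.ract_mul]; rfl

lemma FODC.lact_one_apply (x : V) : F.lact 1 x = x := by rw [F.lact_one]; rfl

lemma FODC.ract_one_apply (x : V) : F.ract 1 x = x := by rw [F.ract_one]; rfl

lemma FODC.d_one : F.d 1 = 0 := by
  have h := F.leibniz 1 1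
  rw [one_mul, F.lact_one, F.ract_one] at h
  simp only [LinearMap.id_apply] at h
  have := left_eq_add.mp h
  exact this

lemma FODC.ract_unit_inj (w : Aˣ) : Function.Injective (F.ract (w : A)) := by
  intro x y hxy
  have key : ∀ z, F.ract (↑w⁻¹ : A) (F.ract (w : A) z) = z := by
    intro z
    rw [← F.ract_mul_apply, Units.mul_inv, F.ract_one_apply]
  rw [← key x, ← key y, hxy]

lemma FODC.ract_unit_inv {w : Aˣ} {x : V} {c : K} (hc : c ≠ 0)
    (h : F.ract (w : A) x = c • F.lact (w : A) x) :
    F.ract (↑w⁻¹ : A) x = c⁻¹ • F.lact (↑w⁻¹ : A) x := by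
  apply F.ract_unit_inj w
  have h1 : F.ract (w : A) (F.ract (↑w⁻¹ : A) x) = x := by
    rw [← F.ract_mul_apply, Units.inv_mul, F.ract_one_apply]
  rw [h1, map_smul, ← F.lr_comm, h, map_smul, ← F.lact_mul_apply,
    Units.inv_mul, F.lact_one_apply, smul_smul, inv_mul_cancel₀ hc, one_smul]

lemma FODC.ract_unit_zpow {w : Aˣ} {x : V} {c : K} (hc : c ≠ 0)
    (h : F.ract (w : A) x = c • F.lact (w : A) x) (m : ℤ) :
    F.ract (↑(w ^ m) : A) x = (c ^ m) • F.lact (↑(w ^ m) : A) x := by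
  induction m using Int.induction_on with
  | zero => simp [F.ract_one_apply, F.lact_one_apply]
  | succ n ih =>
      rw [zpow_add_one, Units.val_mul, F.ract_mul_apply, ih, map_smul,
        ← F.lr_comm, h, map_smul, ← F.lact_mul_apply, ← Units.val_mul,
        ← zpow_add_one, smul_smul, ← zpow_add_one₀ hc]
  | pred n ih =>
      have hinv := F.ract_unit_inv hc h
      rw [zpow_sub_one, Units.val_mul, F.ract_mul_apply, ih, map_smul,
        ← F.lr_comm, hinv, map_smul, ← F.lact_mul_apply, ← Units.val_mul,
        ← zpow_sub_one, smul_smul, ← zpow_sub_one₀ hc]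

end FODCAux

section UnitComm

variable {A : Type} [Ring A] [Algebra ℂ A]

lemma unit_comm_inv {x : Aˣ} {y : A} {c : ℂ} (hc : c ≠ 0)
    (h : y * (x : A) = c • ((x : A) * y)) :
    y * (↑x⁻¹ : A) = c⁻¹ • ((↑x⁻¹ : A) * y) := by
  have h2 : (↑x⁻¹ : A) * y = c • (y * (↑x⁻¹ : A)) := by
    have h3 := congrArg (fun z => (↑x⁻¹ : A) * z * (↑x⁻¹ : A)) h
    simp only [mul_assoc, Units.mul_inv_cancel_left, Units.inv_mul_cancel_left,
      mul_smul_comm, smul_mul_assoc, Units.mul_inv, mul_one] at h3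
    exact h3
  rw [h2, smul_smul, inv_mul_cancel₀ hc, one_smul]

lemma unit_comm_zpow {x : Aˣ} {y : A} {c : ℂ} (hc : c ≠ 0)
    (h : y * (x : A) = c • ((x : A) * y)) (m : ℤ) :
    y * (↑(x ^ m) : A) = (c ^ m) • ((↑(x ^ m) : A) * y) := by
  induction m using Int.induction_on with
  | zero => simp
  | succ n ih =>
      rw [zpow_add_one, Units.val_mul, ← mul_assoc, ih, smul_mul_assoc,
        mul_assoc, h, mul_smul_comm, smul_smul, ← mul_assoc,
        ← zpow_add_one₀ hc]
  | pred n ih =>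
      have hinv := unit_comm_inv hc h
      rw [zpow_sub_one, Units.val_mul, ← mul_assoc, ih, smul_mul_assoc,
        mul_assoc, hinv, mul_smul_comm, smul_smul, ← mul_assoc,
        ← zpow_sub_one₀ hc]

end UnitComm
section ActAux

variable {A H V : Type} [AddCommGroup A] [Module ℂ A] [AddCommGroup H] [Module ℂ H]
  [AddCommGroup V] [Module ℂ V]

lemma actT_tmul (act : A →ₗ[ℂ] V →ₗ[ℂ] V) (mulH : H →ₗ[ℂ] H →ₗ[ℂ] H)
    (a : A) (h : H) (v : V) (g : H) :
    actT ℂ act mulH (a ⊗ₜ[ℂ] h) (v ⊗ₜ[ℂ] g) = act a v ⊗ₜ[ℂ] mulH h g := by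
  simp [actT]

lemma actTL_tmul (act : A →ₗ[ℂ] V →ₗ[ℂ] V) (mulH : H →ₗ[ℂ] H →ₗ[ℂ] H)
    (h : H) (a : A) (g : H) (v : V) :
    actTL ℂ act mulH (h ⊗ₜ[ℂ] a) (g ⊗ₜ[ℂ] v) = mulH h g ⊗ₜ[ℂ] act a v := by
  simp [actTL]

end ActAux

section HopfAux

variable {H : Type} [CommRing H] [HopfAlgebra ℂ H]

/-- Grouplike powers. -/
lemma comul_unit_zpow {t : Hˣ}
    (ht : Coalgebra.comul (R := ℂ) ((t : Hˣ) : H) = ((t : Hˣ) : H) ⊗ₜ[ℂ] ((t : Hˣ) : H))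
    (m : ℤ) :
    Coalgebra.comul (R := ℂ) ((↑(t ^ m) : H)) = (↑(t ^ m) : H) ⊗ₜ[ℂ] (↑(t ^ m) : H) := by
  classical
  let f : H →* H ⊗[ℂ] H := (Bialgebra.comulAlgHom ℂ H : H →ₐ[ℂ] H ⊗[ℂ] H).toMonoidHom
  let iL : H →* H ⊗[ℂ] H :=
    (Algebra.TensorProduct.includeLeft (R := ℂ) (S := ℂ) (A := H) (B := H) :
      H →ₐ[ℂ] H ⊗[ℂ] H).toMonoidHom
  let iR : H →* H ⊗[ℂ] H :=
    (Algebra.TensorProduct.includeRight (R := ℂ) (A := H) (B := H) :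
      H →ₐ[ℂ] H ⊗[ℂ] H).toMonoidHom
  have hmap : Units.map f t = Units.map iL t * Units.map iR t := by
    apply Units.ext
    simp only [Units.coe_map, Units.val_mul]
    show Coalgebra.comul (R := ℂ) ((t : Hˣ) : H) = _
    rw [ht]
    simp [f, iL, iR, Algebra.TensorProduct.tmul_mul_tmul]
  have hcomm : Commute (Units.map iL t) (Units.map iR t) := by
    apply Units.ext
    simp [iL, iR, Algebra.TensorProduct.tmul_mul_tmul]
  have h1 : Coalgebra.comul (R := ℂ) ((↑(t ^ m) : H)) = ↑((Units.map f t) ^ m) := by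
    rw [← map_zpow (Units.map f) t m, Units.coe_map]
    rfl
  rw [h1, hmap, hcomm.mul_zpow, Units.val_mul, ← map_zpow, ← map_zpow,
    Units.coe_map, Units.coe_map]
  simp [iL, iR, Algebra.TensorProduct.tmul_mul_tmul]

lemma counit_unit_zpow {t : Hˣ}
    (ht : Coalgebra.counit (R := ℂ) ((t : Hˣ) : H) = 1) (m : ℤ) :
    Coalgebra.counit (R := ℂ) ((↑(t ^ m) : H)) = 1 := by
  let f : H →* ℂ := (Bialgebra.counitAlgHom ℂ H : H →ₐ[ℂ] ℂ).toMonoidHom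
  have h0 : Units.map f t = 1 := by
    apply Units.ext
    simp only [Units.coe_map, Units.val_one]
    exact ht
  have h1 : Coalgebra.counit (R := ℂ) ((↑(t ^ m) : H)) = ↑((Units.map f t) ^ m) := by
    rw [← map_zpow (Units.map f) t m, Units.coe_map]
    rfl
  rw [h1, h0, one_zpow, Units.val_one]

lemma antipode_unit_zpow {t : Hˣ}
    (ht : Coalgebra.comul (R := ℂ) ((t : Hˣ) : H) = ((t : Hˣ) : H) ⊗ₜ[ℂ] ((t : Hˣ) : H))
    (hε : Coalgebra.counit (R := ℂ) ((t : Hˣ) : H) = 1) (m : ℤ) :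
    HopfAlgebra.antipode (R := ℂ) ((↑(t ^ m) : H)) = (↑(t ^ (-m)) : H) := by
  have h1 := HopfAlgebra.mul_antipode_rTensor_comul_apply (R := ℂ) ((↑(t ^ m) : H))
  rw [comul_unit_zpow ht m, counit_unit_zpow hε m] at h1
  simp only [LinearMap.rTensor_tmul, LinearMap.mul'_apply, map_one] at h1
  -- h1 : antipode (t^m) * t^m = 1
  have h2 : HopfAlgebra.antipode (R := ℂ) ((↑(t ^ m) : H)) =
      HopfAlgebra.antipode (R := ℂ) ((↑(t ^ m) : H)) * ((↑(t ^ m) : H) * (↑(t ^ (-m)) : H)) := by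
    rw [← Units.val_mul, ← zpow_add, add_neg_cancel, zpow_zero, Units.val_one, mul_one]
  rw [h2, ← mul_assoc, h1, one_mul]

end HopfAux
/-! ### Torus bundle: basic algebra structure -/

namespace TorusBundle2

variable (T : TorusBundle2)

/-- `u` as a unit. -/
def Uu : T.Aˣ := ⟨T.u, T.u', T.uu', T.u'u⟩

/-- `v` as a unit. -/
def Vu : T.Aˣ := ⟨T.v, T.v', T.vv', T.v'v⟩

/-- The deformation parameter `q = e^{iθ}`. -/
def qc : ℂ := Complex.exp (T.θ * Complex.I)

lemma qc_ne : T.qc ≠ 0 := Complex.exp_ne_zero _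

lemma exp_neg_eq : Complex.exp (-(T.θ * Complex.I)) = T.qc⁻¹ := by
  rw [Complex.exp_neg]; rfl

lemma basisA_eq' (m n : ℤ) :
    T.basisA (m, n) = (↑(T.Uu ^ m) : T.A) * (↑(T.Vu ^ n) : T.A) :=
  T.basisA_eq m n

lemma rel' : (T.Vu : T.A) * (T.Uu : T.A) = T.qc • ((T.Uu : T.A) * (T.Vu : T.A)) := T.rel

/-- Commutation of `v` with powers of `u`. -/
lemma v_mul_u_zpow (p : ℤ) :
    (T.Vu : T.A) * (↑(T.Uu ^ p) : T.A)
      = (T.qc ^ p) • ((↑(T.Uu ^ p) : T.A) * (T.Vu : T.A)) :=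
  unit_comm_zpow T.qc_ne T.rel' p

/-- Commutation of powers of `v` with powers of `u`. -/
lemma v_zpow_mul_u_zpow (n p : ℤ) :
    (↑(T.Vu ^ n) : T.A) * (↑(T.Uu ^ p) : T.A)
      = (T.qc ^ (n * p)) • ((↑(T.Uu ^ p) : T.A) * (↑(T.Vu ^ n) : T.A)) := by
  have base : (↑(T.Uu ^ p) : T.A) * (T.Vu : T.A)
      = (T.qc ^ p)⁻¹ • ((T.Vu : T.A) * (↑(T.Uu ^ p) : T.A)) := by
    rw [T.v_mul_u_zpow p, smul_smul, inv_mul_cancel₀ (zpow_ne_zero _ T.qc_ne), one_smul]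
  have base' : (T.Vu : T.A) * (↑(T.Uu ^ p) : T.A)
      = (T.qc ^ p) • ((↑(T.Uu ^ p) : T.A) * (T.Vu : T.A)) := T.v_mul_u_zpow p
  have := unit_comm_zpow (x := T.Vu) (y := (↑(T.Uu ^ p) : T.A))
    (c := (T.qc ^ p)⁻¹) (inv_ne_zero (zpow_ne_zero _ T.qc_ne)) base n
  -- this : ↑(U^p) * ↑(V^n) = ((q^p)⁻¹)^n • (↑(V^n) * ↑(U^p))
  rw [this, smul_smul]
  rw [← zpow_neg, ← zpow_mul, ← zpow_add₀ T.qc_ne]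
  have : n * p + -p * n = 0 := by ring
  rw [this, zpow_zero, one_smul]

/-- The product formula for basis elements. -/
lemma basisA_mul (m n p r : ℤ) :
    T.basisA (m, n) * T.basisA (p, r)
      = (T.qc ^ (n * p)) • T.basisA (m + p, n + r) := by
  rw [T.basisA_eq', T.basisA_eq', T.basisA_eq']
  rw [mul_assoc, ← mul_assoc (↑(T.Vu ^ n) : T.A), T.v_zpow_mul_u_zpow n p]
  rw [smul_mul_assoc, mul_smul_comm]
  congr 1
  rw [mul_assoc, ← Units.val_mul, ← zpow_add, ← mul_assoc, ← Units.val_mul, ← zpow_add]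

lemma one_eq_basisA : (1 : T.A) = T.basisA (0, 0) := by
  rw [T.basisA_eq']; simp

lemma u_eq_basisA : T.u = T.basisA (1, 0) := by
  rw [T.basisA_eq']; simp; rfl

lemma v_eq_basisA : T.v = T.basisA (0, 1) := by
  rw [T.basisA_eq']; simp; rfl

lemma uv_eq_basisA : T.u * T.v = T.basisA (1, 1) := by
  rw [T.basisA_eq']; simp; rfl

lemma basisA_mul_u (m n : ℤ) :
    T.basisA (m, n) * T.u = (T.qc ^ n) • T.basisA (m + 1, n) := by
  rw [T.u_eq_basisA, T.basisA_mul]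
  norm_num

lemma basisA_mul_v (m n : ℤ) :
    T.basisA (m, n) * T.v = T.basisA (m, n + 1) := by
  rw [T.v_eq_basisA, T.basisA_mul]
  norm_num

end TorusBundle2
namespace TorusBundle2

variable (T : TorusBundle2)

/-- The coaction as a monoid hom. -/
def rhoM : T.A →* T.A ⊗[ℂ] T.H where
  toFun := T.ca.ρ
  map_one' := T.ca.ρ_one
  map_mul' := T.ca.ρ_mul

lemma rho_u_zpow (m : ℤ) :
    T.ca.ρ (↑(T.Uu ^ m) : T.A) = (↑(T.Uu ^ m) : T.A) ⊗ₜ[ℂ] (↑(T.t ^ m) : T.H) := by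
  let iL : T.A →* T.A ⊗[ℂ] T.H :=
    (Algebra.TensorProduct.includeLeft (R := ℂ) (S := ℂ) (A := T.A) (B := T.H) :
      T.A →ₐ[ℂ] T.A ⊗[ℂ] T.H).toMonoidHom
  let iR : T.H →* T.A ⊗[ℂ] T.H :=
    (Algebra.TensorProduct.includeRight (R := ℂ) (A := T.A) (B := T.H) :
      T.H →ₐ[ℂ] T.A ⊗[ℂ] T.H).toMonoidHom
  have hmap : Units.map T.rhoM T.Uu = Units.map iL T.Uu * Units.map iR T.t := by
    apply Units.ext
    simp only [Units.coe_map, Units.val_mul]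
    show T.ca.ρ T.u = _
    rw [T.ρu]
    simp only [iL, iR]
    rw [show T.u = (T.Uu : T.A) from rfl]
    simp [Algebra.TensorProduct.tmul_mul_tmul]
  have hcomm : Commute (Units.map iL T.Uu) (Units.map iR T.t) := by
    apply Units.ext
    simp [iL, iR, Algebra.TensorProduct.tmul_mul_tmul]
  have h1 : T.ca.ρ (↑(T.Uu ^ m) : T.A) = ↑((Units.map T.rhoM T.Uu) ^ m) := by
    rw [← map_zpow (Units.map T.rhoM) T.Uu m, Units.coe_map]
    rfl
  rw [h1, hmap, hcomm.mul_zpow, Units.val_mul, ← map_zpow, ← map_zpow,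
    Units.coe_map, Units.coe_map]
  simp [iL, iR, Algebra.TensorProduct.tmul_mul_tmul]

lemma rho_v_zpow (n : ℤ) :
    T.ca.ρ (↑(T.Vu ^ n) : T.A) = (↑(T.Vu ^ n) : T.A) ⊗ₜ[ℂ] (↑(T.t ^ (-n)) : T.H) := by
  let iL : T.A →* T.A ⊗[ℂ] T.H :=
    (Algebra.TensorProduct.includeLeft (R := ℂ) (S := ℂ) (A := T.A) (B := T.H) :
      T.A →ₐ[ℂ] T.A ⊗[ℂ] T.H).toMonoidHom
  let iR : T.H →* T.A ⊗[ℂ] T.H :=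
    (Algebra.TensorProduct.includeRight (R := ℂ) (A := T.A) (B := T.H) :
      T.H →ₐ[ℂ] T.A ⊗[ℂ] T.H).toMonoidHom
  have hmap : Units.map T.rhoM T.Vu = Units.map iL T.Vu * Units.map iR T.t⁻¹ := by
    apply Units.ext
    simp only [Units.coe_map, Units.val_mul]
    show T.ca.ρ T.v = _
    rw [T.ρv]
    simp only [iL, iR]
    rw [show T.v = (T.Vu : T.A) from rfl]
    simp [Algebra.TensorProduct.tmul_mul_tmul]
  have hcomm : Commute (Units.map iL T.Vu) (Units.map iR T.t⁻¹) := by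
    apply Units.ext
    simp [iL, iR, Algebra.TensorProduct.tmul_mul_tmul]
  have h1 : T.ca.ρ (↑(T.Vu ^ n) : T.A) = ↑((Units.map T.rhoM T.Vu) ^ n) := by
    rw [← map_zpow (Units.map T.rhoM) T.Vu n, Units.coe_map]
    rfl
  rw [h1, hmap, hcomm.mul_zpow, Units.val_mul, ← map_zpow, ← map_zpow,
    Units.coe_map, Units.coe_map]
  have : (T.t⁻¹) ^ n = T.t ^ (-n) := by rw [inv_zpow, zpow_neg]
  rw [this]
  simp [iL, iR, Algebra.TensorProduct.tmul_mul_tmul]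

/-- The coaction on basis elements. -/
lemma rho_basisA (m n : ℤ) :
    T.ca.ρ (T.basisA (m, n)) = T.basisA (m, n) ⊗ₜ[ℂ] (↑(T.t ^ (m - n)) : T.H) := by
  rw [T.basisA_eq', T.ca.ρ_mul, T.rho_u_zpow, T.rho_v_zpow,
    Algebra.TensorProduct.tmul_mul_tmul, ← Units.val_mul (T.t ^ m), ← zpow_add,
    ← T.basisA_eq']
  rw [sub_eq_add_neg]

end TorusBundle2
section FODCAux2

variable {K : Type} [Field K] {A V : Type} [Ring A] [Algebra K A]
  [AddCommGroup V] [Module K V] (F : FODC K A V)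

lemma FODC.d_unit_inv (w : Aˣ) (h : F.ract (w : A) (F.d (w : A)) = F.lact (w : A) (F.d (w : A))) :
    F.d (↑w⁻¹ : A) = -F.lact ((↑w⁻¹ : A) * (↑w⁻¹ : A)) (F.d (w : A)) := by
  have h1 : (1 : K) ≠ 0 := one_ne_zero
  have h' : F.ract (w : A) (F.d (w : A)) = (1 : K) • F.lact (w : A) (F.d (w : A)) := by
    rw [one_smul]; exact h
  have hrinv : F.ract (↑w⁻¹ : A) (F.d (w : A)) = F.lact (↑w⁻¹ : A) (F.d (w : A)) := by
    have := F.ract_unit_inv h1 h'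
    rwa [inv_one, one_smul] at this
  have h0 : F.lact (w : A) (F.d (↑w⁻¹ : A)) + F.lact (↑w⁻¹ : A) (F.d (w : A)) = 0 := by
    have := F.leibniz (w : A) (↑w⁻¹ : A)
    rw [Units.mul_inv, F.d_one, hrinv] at this
    exact this.symm
  have h2 : F.lact (w : A) (F.d (↑w⁻¹ : A)) = -F.lact (↑w⁻¹ : A) (F.d (w : A)) :=
    eq_neg_of_add_eq_zero_left h0
  calc F.d (↑w⁻¹ : A) = F.lact ((↑w⁻¹ : A) * (w : A)) (F.d (↑w⁻¹ : A)) := by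
        rw [Units.inv_mul, F.lact_one_apply]
    _ = F.lact (↑w⁻¹ : A) (F.lact (w : A) (F.d (↑w⁻¹ : A))) := F.lact_mul_apply _ _ _
    _ = -F.lact ((↑w⁻¹ : A) * (↑w⁻¹ : A)) (F.d (w : A)) := by
        rw [h2, map_neg, ← F.lact_mul_apply]

lemma FODC.d_unit_zpow (w : Aˣ)
    (h : F.ract (w : A) (F.d (w : A)) = F.lact (w : A) (F.d (w : A))) (m : ℤ) :
    F.d (↑(w ^ m) : A) = (m : K) • F.lact (↑(w ^ (m - 1)) : A) (F.d (w : A)) := by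
  have h1 : (1 : K) ≠ 0 := one_ne_zero
  have h' : F.ract (w : A) (F.d (w : A)) = (1 : K) • F.lact (w : A) (F.d (w : A)) := by
    rw [one_smul]; exact h
  have hrinv : F.ract (↑w⁻¹ : A) (F.d (w : A)) = F.lact (↑w⁻¹ : A) (F.d (w : A)) := by
    have := F.ract_unit_inv h1 h'
    rwa [inv_one, one_smul] at this
  induction m using Int.induction_on with
  | zero => simp [F.d_one]
  | succ n ih =>
      have e1 : ((n : ℤ) + 1 : ℤ) = (n : ℤ) + 1 := rfl
      rw [zpow_add_one, Units.val_mul]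
      rw [F.leibniz, ih, map_smul, ← F.lr_comm, h, ← F.lact_mul_apply,
        ← Units.val_mul, ← zpow_add_one]
      have e2 : ((n : ℤ) - 1 + 1 : ℤ) = (n : ℤ) := by ring
      have e3 : ((n : ℤ) + 1 - 1 : ℤ) = (n : ℤ) := by ring
      rw [e2, e3]
      push_cast
      module
  | pred n ih =>
      have hdinv := F.d_unit_inv w h
      rw [zpow_sub_one, Units.val_mul]
      rw [F.leibniz, hdinv, map_neg, ← F.lact_mul_apply, ih, map_smul,
        ← F.lr_comm, hrinv, ← F.lact_mul_apply]
      have e1 : (↑(w ^ (-(n : ℤ))) : A) * ((↑w⁻¹ : A) * (↑w⁻¹ : A))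
          = (↑(w ^ (-(n : ℤ) - 1 - 1)) : A) := by
        rw [← mul_assoc, ← Units.val_mul, ← zpow_sub_one, ← Units.val_mul, ← zpow_sub_one]
      have e2 : (↑(w ^ (-(n : ℤ) - 1)) : A) * (↑w⁻¹ : A)
          = (↑(w ^ (-(n : ℤ) - 1 - 1)) : A) := by
        rw [← Units.val_mul, ← zpow_sub_one]
      rw [e1, e2]
      push_cast
      module

end FODCAux2
namespace TorusBundle2

variable (T : TorusBundle2)

lemma comm_du_v' : T.FA.ract T.v (T.FA.d T.u) = T.qc⁻¹ • T.FA.lact T.v (T.FA.d T.u) := by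
  rw [← T.exp_neg_eq]; exact T.comm_du_v

lemma comm_dv_u' : T.FA.ract T.u (T.FA.d T.v) = T.qc • T.FA.lact T.u (T.FA.d T.v) := by
  have : T.qc = Complex.exp (T.θ * Complex.I) := rfl
  rw [this]; exact T.comm_dv_u

lemma ract_u_zpow_du (m : ℤ) :
    T.FA.ract (↑(T.Uu ^ m) : T.A) (T.FA.d T.u)
      = T.FA.lact (↑(T.Uu ^ m) : T.A) (T.FA.d T.u) := by
  have base : T.FA.ract (T.Uu : T.A) (T.FA.d T.u)
      = (1 : ℂ) • T.FA.lact (T.Uu : T.A) (T.FA.d T.u) := by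
    rw [one_smul]; exact T.comm_du_u
  have := T.FA.toFODC.ract_unit_zpow (one_ne_zero) base m
  rwa [one_zpow, one_smul] at this

lemma ract_v_zpow_du (n : ℤ) :
    T.FA.ract (↑(T.Vu ^ n) : T.A) (T.FA.d T.u)
      = (T.qc ^ (-n)) • T.FA.lact (↑(T.Vu ^ n) : T.A) (T.FA.d T.u) := by
  have base : T.FA.ract (T.Vu : T.A) (T.FA.d T.u)
      = T.qc⁻¹ • T.FA.lact (T.Vu : T.A) (T.FA.d T.u) := T.comm_du_v'
  have := T.FA.toFODC.ract_unit_zpow (inv_ne_zero T.qc_ne) base n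
  rwa [inv_zpow, ← zpow_neg] at this

lemma ract_u_zpow_dv (m : ℤ) :
    T.FA.ract (↑(T.Uu ^ m) : T.A) (T.FA.d T.v)
      = (T.qc ^ m) • T.FA.lact (↑(T.Uu ^ m) : T.A) (T.FA.d T.v) :=
  T.FA.toFODC.ract_unit_zpow T.qc_ne T.comm_dv_u' m

lemma ract_v_zpow_dv (n : ℤ) :
    T.FA.ract (↑(T.Vu ^ n) : T.A) (T.FA.d T.v)
      = T.FA.lact (↑(T.Vu ^ n) : T.A) (T.FA.d T.v) := by
  have base : T.FA.ract (T.Vu : T.A) (T.FA.d T.v)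
      = (1 : ℂ) • T.FA.lact (T.Vu : T.A) (T.FA.d T.v) := by
    rw [one_smul]; exact T.comm_dv_v
  have := T.FA.toFODC.ract_unit_zpow (one_ne_zero) base n
  rwa [one_zpow, one_smul] at this

lemma ract_basisA_du (m n : ℤ) :
    T.FA.ract (T.basisA (m, n)) (T.FA.d T.u)
      = (T.qc ^ (-n)) • T.FA.lact (T.basisA (m, n)) (T.FA.d T.u) := by
  rw [T.basisA_eq', T.FA.toFODC.ract_mul_apply, T.ract_u_zpow_du,
    ← T.FA.toFODC.lr_comm, T.ract_v_zpow_du, map_smul, ← T.FA.toFODC.lact_mul_apply]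

lemma ract_basisA_dv (m n : ℤ) :
    T.FA.ract (T.basisA (m, n)) (T.FA.d T.v)
      = (T.qc ^ m) • T.FA.lact (T.basisA (m, n)) (T.FA.d T.v) := by
  rw [T.basisA_eq', T.FA.toFODC.ract_mul_apply, T.ract_u_zpow_dv, map_smul,
    ← T.FA.toFODC.lr_comm, T.ract_v_zpow_dv, ← T.FA.toFODC.lact_mul_apply]

lemma d_basisA (m n : ℤ) :
    T.FA.d (T.basisA (m, n))
      = (n : ℂ) • T.FA.lact (T.basisA (m, n - 1)) (T.FA.d T.v)
        + ((m : ℂ) * T.qc ^ (-n)) • T.FA.lact (T.basisA (m - 1, n)) (T.FA.d T.u) := by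
  have hu : T.FA.d (↑(T.Uu ^ m) : T.A)
      = (m : ℂ) • T.FA.lact (↑(T.Uu ^ (m - 1)) : T.A) (T.FA.d T.u) :=
    T.FA.toFODC.d_unit_zpow T.Uu T.comm_du_u m
  have hv : T.FA.d (↑(T.Vu ^ n) : T.A)
      = (n : ℂ) • T.FA.lact (↑(T.Vu ^ (n - 1)) : T.A) (T.FA.d T.v) :=
    T.FA.toFODC.d_unit_zpow T.Vu T.comm_dv_v n
  rw [T.basisA_eq', T.FA.toFODC.leibniz, hu, hv, map_smul, map_smul,
    ← T.FA.toFODC.lact_mul_apply, ← T.FA.toFODC.lr_comm, T.ract_v_zpow_du, map_smul,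
    ← T.FA.toFODC.lact_mul_apply]
  rw [T.basisA_eq' m (n-1), T.basisA_eq' (m-1) n, mul_smul]

end TorusBundle2
section VarpiAux

variable {H : Type} [Ring H] [HopfAlgebra ℂ H] {VH : Type} [AddCommGroup VH] [Module ℂ VH]

lemma varpi1_grouplike (L : LCovFODC ℂ (H := H) VH) (g : H)
    (hg : Coalgebra.comul (R := ℂ) g = g ⊗ₜ[ℂ] g) :
    varpi1 L g = TensorProduct.lift
      ((L.lact ∘ₗ HopfAlgebra.antipode (R := ℂ)).compl₂ L.d) (g ⊗ₜ[ℂ] g) := by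
  rw [varpi1, LinearMap.comp_apply, hg]

lemma varpi1_grouplike_eq (L : LCovFODC ℂ (H := H) VH) (g : H)
    (hg : Coalgebra.comul (R := ℂ) g = g ⊗ₜ[ℂ] g) :
    varpi1 L g = L.lact (HopfAlgebra.antipode (R := ℂ) g) (L.d g) := by
  rw [varpi1_grouplike L g hg]
  simp [TensorProduct.lift.tmul]

end VarpiAux

namespace TorusBundle2

variable (T : TorusBundle2)

lemma varpi_tz (m : ℤ) :
    varpi1 T.LH (↑(T.t ^ m) : T.H)
      = T.LH.lact (↑(T.t ^ (-m)) : T.H) (T.LH.d (↑(T.t ^ m) : T.H)) := by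
  rw [varpi1_grouplike_eq T.LH _ (comul_unit_zpow T.grouplike_t m),
    antipode_unit_zpow T.grouplike_t T.counit_t m]

lemma t_eq_tz : ((T.t : T.Hˣ) : T.H) = (↑(T.t ^ (1 : ℤ)) : T.H) := by rw [zpow_one]

lemma varpi_t0 : varpi1 T.LH (↑(T.t ^ (0 : ℤ)) : T.H) = 0 := by
  rw [T.varpi_tz 0]
  have h0 : (↑(T.t ^ (0 : ℤ)) : T.H) = 1 := by rw [zpow_zero, Units.val_one]
  rw [h0, T.LH.toFODC.d_one, map_zero]

/-- Cartan-Maurer forms of grouplikes are left coinvariant. -/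
lemma varpi_tz_mem (m : ℤ) : varpi1 T.LH (↑(T.t ^ m) : T.H) ∈ Lam1 T.LH := by
  rw [Lam1, LinearMap.mem_ker, LinearMap.sub_apply, sub_eq_zero, TensorProduct.mk_apply]
  rw [T.varpi_tz m, T.LH.lam_l, comul_unit_zpow T.grouplike_t (-m)]
  have hlamd : T.LH.lam (T.LH.d (↑(T.t ^ m) : T.H))
      = (↑(T.t ^ m) : T.H) ⊗ₜ[ℂ] T.LH.d (↑(T.t ^ m) : T.H) := by
    rw [T.LH.lam_d, comul_unit_zpow T.grouplike_t m, LinearMap.lTensor_tmul]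
  rw [hlamd, actTL_tmul]
  congr 1
  · rw [LinearMap.mul_apply', ← Units.val_mul, ← zpow_add, neg_add_cancel, zpow_zero,
      Units.val_one]

lemma varpi_tz_smul (m : ℤ) :
    ∃ c : ℂ, varpi1 T.LH (↑(T.t ^ m) : T.H) = c • varpi1 T.LH ((T.t : T.Hˣ) : T.H) := by
  have h := T.varpi_tz_mem m
  rw [T.lam1_span, Submodule.mem_span_singleton] at h
  obtain ⟨c, hc⟩ := h
  exact ⟨c, hc.symm⟩

/-- The free module structure on `VH`. -/
def psiH : T.H →ₗ[ℂ] T.VH := T.LH.lact.flip (T.LH.d ((T.t : T.Hˣ) : T.H))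

lemma psiH_bij : Function.Bijective T.psiH := by
  constructor
  · intro x y hxy
    obtain ⟨p, hp, hu⟩ := T.freeH (T.psiH x)
    have hx : x = p := hu x rfl
    have hy : y = p := hu y (by exact hxy)
    rw [hx, hy]
  · intro x
    obtain ⟨q, hq, _⟩ := T.freeH x
    exact ⟨q, hq.symm⟩

/-- `VH ≃ H`. -/
def psiE : T.H ≃ₗ[ℂ] T.VH := LinearEquiv.ofBijective T.psiH T.psiH_bij

/-- A functional on `VH` detecting `ϖ(t)`. -/
def phiH : T.VH →ₗ[ℂ] ℂ := T.basisH.coord (-1) ∘ₗ (T.psiE.symm : T.VH →ₗ[ℂ] T.H)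

lemma varpi_t_eq_psi :
    varpi1 T.LH ((T.t : T.Hˣ) : T.H) = T.psiH (T.basisH (-1)) := by
  rw [T.basisH_eq]
  have h2 := T.varpi_tz 1
  rw [zpow_one] at h2
  exact h2

lemma phiH_varpi_t : T.phiH (varpi1 T.LH ((T.t : T.Hˣ) : T.H)) = 1 := by
  rw [T.varpi_t_eq_psi, phiH, LinearMap.comp_apply]
  have h1 : T.psiH (T.basisH (-1)) = T.psiE (T.basisH (-1)) := rfl
  rw [h1]
  simp only [LinearEquiv.coe_coe, LinearEquiv.symm_apply_apply]
  rw [Module.Basis.coord_apply, Module.Basis.repr_self, Finsupp.single_eq_same]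

lemma tmul_varpi_cancel {x : T.A}
    (h : x ⊗ₜ[ℂ] (varpi1 T.LH ((T.t : T.Hˣ) : T.H)) = 0) : x = 0 := by
  have h2 := congrArg
    (fun z => (TensorProduct.rid ℂ T.A) ((LinearMap.lTensor T.A T.phiH) z)) h
  simpa [T.phiH_varpi_t] using h2

lemma uv_tmul_cancel {w : T.VH} (h : (T.basisA (1, 1)) ⊗ₜ[ℂ] w = 0) : w = 0 := by
  have h2 := congrArg
    (fun z => (TensorProduct.lid ℂ T.VH)
      ((LinearMap.rTensor T.VH (T.basisA.coord (1, 1))) z)) h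
  simpa [Module.Basis.coord_apply, Module.Basis.repr_self] using h2

end TorusBundle2
namespace TorusBundle2

variable (T : TorusBundle2)

lemma rho_u' : T.ca.ρ T.u = T.u ⊗ₜ[ℂ] (↑(T.t ^ (1 : ℤ)) : T.H) := by
  rw [← T.t_eq_tz]; exact T.ρu

lemma rho_v' : T.ca.ρ T.v = T.v ⊗ₜ[ℂ] (↑(T.t ^ (-1 : ℤ)) : T.H) := by
  rw [zpow_neg, zpow_one]; exact T.ρv

lemma nuMap_simple (x : T.A) (m : ℤ)
    (hx : T.ca.ρ x = x ⊗ₜ[ℂ] (↑(T.t ^ m) : T.H)) :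
    nuMap T.ca T.LH x = x ⊗ₜ[ℂ] varpi1 T.LH (↑(T.t ^ m) : T.H) := by
  rw [nuMap]
  simp only [LinearMap.comp_apply, LinearEquiv.coe_coe]
  rw [hx, LinearMap.rTensor_tmul, hx]
  simp only [TensorProduct.assoc_tmul, LinearMap.lTensor_tmul]
  rw [varpi1_grouplike T.LH _ (comul_unit_zpow T.grouplike_t m)]

lemma pv_lact (a x : T.A) (m : ℤ)
    (hx : T.ca.ρ x = x ⊗ₜ[ℂ] (↑(T.t ^ m) : T.H)) :
    T.FO.pv (T.FA.lact a (T.FA.d x))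
      = (a * x) ⊗ₜ[ℂ] varpi1 T.LH (↑(T.t ^ m) : T.H) := by
  rw [T.FO.pv_eq, T.nuMap_simple x m hx, LinearMap.rTensor_tmul,
    LinearMap.mulLeft_apply]

lemma rho_uv : T.ca.ρ (T.u * T.v)
    = (T.u * T.v) ⊗ₜ[ℂ] (↑(T.t ^ (0 : ℤ)) : T.H) := by
  rw [T.ca.ρ_mul, T.rho_u', T.rho_v', Algebra.TensorProduct.tmul_mul_tmul,
    ← Units.val_mul, ← zpow_add]
  norm_num

/-- The key consequence of first-order completeness: `ϖ(t⁻¹) = -ϖ(t)`. -/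
lemma varpi_tinv :
    varpi1 T.LH (↑(T.t ^ (-1 : ℤ)) : T.H)
      = -varpi1 T.LH (↑(T.t ^ (1 : ℤ)) : T.H) := by
  have hpv0 : T.FO.pv (T.FA.d (T.u * T.v))
      = (T.u * T.v) ⊗ₜ[ℂ] varpi1 T.LH (↑(T.t ^ (0 : ℤ)) : T.H) := by
    have h1 : T.FA.d (T.u * T.v) = T.FA.lact 1 (T.FA.d (T.u * T.v)) :=
      (T.FA.toFODC.lact_one_apply _).symm
    rw [h1, T.pv_lact 1 (T.u * T.v) 0 T.rho_uv, one_mul]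
  rw [T.varpi_t0, TensorProduct.tmul_zero] at hpv0
  have hd : T.FA.d (T.u * T.v)
      = T.FA.lact T.u (T.FA.d T.v) + T.qc⁻¹ • T.FA.lact T.v (T.FA.d T.u) := by
    rw [T.FA.toFODC.leibniz, T.comm_du_v']
  have h2 : (0 : T.A ⊗[ℂ] T.VH)
      = (T.u * T.v) ⊗ₜ[ℂ] varpi1 T.LH (↑(T.t ^ (-1 : ℤ)) : T.H)
        + T.qc⁻¹ • ((T.v * T.u) ⊗ₜ[ℂ] varpi1 T.LH (↑(T.t ^ (1 : ℤ)) : T.H)) := by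
    rw [← T.pv_lact T.u T.v (-1) T.rho_v', ← T.pv_lact T.v T.u 1 T.rho_u',
      ← map_smul, ← map_add, ← hd, hpv0]
  have h3 : T.qc⁻¹ • ((T.v * T.u) ⊗ₜ[ℂ] varpi1 T.LH (↑(T.t ^ (1 : ℤ)) : T.H))
      = (T.u * T.v) ⊗ₜ[ℂ] varpi1 T.LH (↑(T.t ^ (1 : ℤ)) : T.H) := by
    rw [T.rel, smul_tmul', smul_smul]
    have : T.qc⁻¹ * Complex.exp (↑T.θ * Complex.I) = 1 := by
      rw [show Complex.exp (↑T.θ * Complex.I) = T.qc from rfl, inv_mul_cancel₀ T.qc_ne]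
    rw [this, one_smul]
  rw [h3, ← TensorProduct.tmul_add] at h2
  rw [T.uv_eq_basisA] at h2
  have h4 := T.uv_tmul_cancel h2.symm
  exact eq_neg_of_add_eq_zero_left h4

end TorusBundle2
namespace TorusBundle2

variable (T : TorusBundle2)

lemma wedge_du_du : T.wedge (T.FA.d T.u) (T.FA.d T.u) = 0 := by
  have hd : T.FA.d (T.u * T.u) = (2 : ℂ) • T.FA.lact T.u (T.FA.d T.u) := by
    rw [T.FA.toFODC.leibniz, T.comm_du_u, two_smul]
  have h0 := T.d1_d (T.u * T.u)
  rw [hd, map_smul, T.d1_leibniz, T.d1_d, map_zero, add_zero] at h0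
  have := smul_eq_zero.mp h0
  rcases this with h | h
  · exact absurd h two_ne_zero
  · exact h

lemma wedge_dv_dv : T.wedge (T.FA.d T.v) (T.FA.d T.v) = 0 := by
  have hd : T.FA.d (T.v * T.v) = (2 : ℂ) • T.FA.lact T.v (T.FA.d T.v) := by
    rw [T.FA.toFODC.leibniz, T.comm_dv_v, two_smul]
  have h0 := T.d1_d (T.v * T.v)
  rw [hd, map_smul, T.d1_leibniz, T.d1_d, map_zero, add_zero] at h0
  have := smul_eq_zero.mp h0
  rcases this with h | h
  · exact absurd h two_ne_zero
  · exact h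

lemma wedge_dv_du :
    T.wedge (T.FA.d T.v) (T.FA.d T.u) = -(T.qc • T.wedge (T.FA.d T.u) (T.FA.d T.v)) := by
  have h := T.wedge_skew
  rw [T.exp_neg_eq] at h
  have h2 := congrArg (fun z => T.qc • z) h
  simp only [smul_neg, smul_smul, mul_inv_cancel₀ T.qc_ne, one_smul] at h2
  exact neg_eq_iff_eq_neg.mp h2.symm

/-- The canonical generator map `c ↦ (c du) ∧ dv`. -/
def Wc : T.A →ₗ[ℂ] T.W2 :=
  (T.wedge.flip (T.FA.d T.v)) ∘ₗ (T.FA.lact.flip (T.FA.d T.u))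

lemma Wc_apply (c : T.A) :
    T.Wc c = T.wedge (T.FA.lact c (T.FA.d T.u)) (T.FA.d T.v) := rfl

lemma w_lact_du_du (c : T.A) : T.wedge (T.FA.lact c (T.FA.d T.u)) (T.FA.d T.u) = 0 := by
  rw [T.wedge_lact, T.wedge_du_du, map_zero]

lemma w_lact_dv_dv (c : T.A) : T.wedge (T.FA.lact c (T.FA.d T.v)) (T.FA.d T.v) = 0 := by
  rw [T.wedge_lact, T.wedge_dv_dv, map_zero]

lemma w_lact_dv_du (c : T.A) :
    T.wedge (T.FA.lact c (T.FA.d T.v)) (T.FA.d T.u) = -(T.qc • T.Wc c) := by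
  rw [T.wedge_lact, T.wedge_dv_du, map_neg, map_smul, ← T.wedge_lact, ← T.Wc_apply]

/-- The twisting automorphisms. -/
def sigv : T.A →ₗ[ℂ] T.A :=
  T.basisA.constr ℂ (fun i => (T.qc ^ (-i.2)) • T.basisA i)

def sigu : T.A →ₗ[ℂ] T.A :=
  T.basisA.constr ℂ (fun i => (T.qc ^ (i.1)) • T.basisA i)

def D1 : T.A →ₗ[ℂ] T.A :=
  T.basisA.constr ℂ (fun i => (-(i.2 : ℂ) * T.qc) • T.basisA (i.1, i.2 - 1))

def D2 : T.A →ₗ[ℂ] T.A :=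
  T.basisA.constr ℂ (fun i => ((i.1 : ℂ) * T.qc ^ (-i.2)) • T.basisA (i.1 - 1, i.2))

def Phi : T.A →ₗ[ℂ] T.A :=
  T.basisA.constr ℂ (fun i => (-(i.2 : ℂ) * T.qc ^ (1 - i.2)) • T.basisA (i.1 - 1, i.2 - 1))

lemma ract_du_sig (c : T.A) :
    T.FA.ract c (T.FA.d T.u) = T.FA.lact (T.sigv c) (T.FA.d T.u) := by
  have h : (T.FA.ract.flip (T.FA.d T.u))
      = (T.FA.lact.flip (T.FA.d T.u)) ∘ₗ T.sigv := by
    apply T.basisA.ext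
    rintro ⟨m, n⟩
    simp only [LinearMap.flip_apply, LinearMap.comp_apply, sigv, Module.Basis.constr_basis,
      map_smul, LinearMap.smul_apply]
    exact T.ract_basisA_du m n
  exact DFunLike.congr_fun h c

lemma ract_dv_sig (c : T.A) :
    T.FA.ract c (T.FA.d T.v) = T.FA.lact (T.sigu c) (T.FA.d T.v) := by
  have h : (T.FA.ract.flip (T.FA.d T.v))
      = (T.FA.lact.flip (T.FA.d T.v)) ∘ₗ T.sigu := by
    apply T.basisA.ext
    rintro ⟨m, n⟩
    simp only [LinearMap.flip_apply, LinearMap.comp_apply, sigu, Module.Basis.constr_basis,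
      map_smul, LinearMap.smul_apply]
    exact T.ract_basisA_dv m n
  exact DFunLike.congr_fun h c

lemma wd_du (c : T.A) : T.wedge (T.FA.d c) (T.FA.d T.u) = T.Wc (T.D1 c) := by
  have h : (T.wedge.flip (T.FA.d T.u)) ∘ₗ T.FA.d = T.Wc ∘ₗ T.D1 := by
    apply T.basisA.ext
    rintro ⟨m, n⟩
    simp only [LinearMap.flip_apply, LinearMap.comp_apply]
    rw [T.d_basisA, map_add, LinearMap.add_apply, map_smul, map_smul,
      LinearMap.smul_apply, LinearMap.smul_apply, T.w_lact_dv_du, T.w_lact_du_du,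
      smul_zero, add_zero]
    simp only [D1, Module.Basis.constr_basis, map_smul]
    rw [smul_neg, smul_smul, neg_mul, neg_smul]
  exact DFunLike.congr_fun h c

lemma wd_dv (c : T.A) : T.wedge (T.FA.d c) (T.FA.d T.v) = T.Wc (T.D2 c) := by
  have h : (T.wedge.flip (T.FA.d T.v)) ∘ₗ T.FA.d = T.Wc ∘ₗ T.D2 := by
    apply T.basisA.ext
    rintro ⟨m, n⟩
    simp only [LinearMap.flip_apply, LinearMap.comp_apply]
    rw [T.d_basisA, map_add, LinearMap.add_apply, map_smul, map_smul,
      LinearMap.smul_apply, LinearMap.smul_apply, T.w_lact_dv_dv,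
      smul_zero, zero_add, ← T.Wc_apply]
    simp only [D2, Module.Basis.constr_basis, map_smul]
  exact DFunLike.congr_fun h c

lemma D1_eq : T.D1 = T.Phi ∘ₗ (LinearMap.mulRight ℂ T.u) := by
  apply T.basisA.ext
  rintro ⟨m, n⟩
  simp only [LinearMap.comp_apply, LinearMap.mulRight_apply, D1, Module.Basis.constr_basis]
  rw [T.basisA_mul_u, map_smul]
  simp only [Phi, Module.Basis.constr_basis]
  rw [smul_smul]
  have e1 : ((m + 1 : ℤ) - 1 : ℤ) = m := by ring
  rw [e1]
  congr 1
  rw [mul_left_comm, ← zpow_add₀ T.qc_ne]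
  have e2 : (n + (1 - n) : ℤ) = 1 := by ring
  rw [e2, zpow_one]

lemma D2_diag (m : ℤ) :
    T.D2 (T.basisA (m, m - 1)) = -T.Phi (T.basisA (m, m - 1) * T.v) := by
  rw [T.basisA_mul_v]
  simp only [D2, Phi, Module.Basis.constr_basis]
  have e1 : ((m - 1 : ℤ) + 1 : ℤ) = m := by ring
  rw [e1, ← neg_smul]
  have e2 : -(-(m : ℂ) * T.qc ^ ((1 : ℤ) - m)) = (m : ℂ) * T.qc ^ (-(m - 1)) := by
    rw [show (-(m - 1) : ℤ) = 1 - m from by ring]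
    ring
  rw [e2]

lemma Phi_one : T.Phi (1 : T.A) = 0 := by
  rw [T.one_eq_basisA]
  simp only [Phi, Module.Basis.constr_basis]
  norm_num

lemma Z2_pointwise (m p : ℤ) :
    T.basisA (m, m + 1) * T.sigv (T.basisA (p, p - 1))
      = T.qc • (T.basisA (p, p - 1) * T.sigu (T.basisA (m, m + 1))) := by
  simp only [sigv, sigu, Module.Basis.constr_basis]
  rw [mul_smul_comm, mul_smul_comm, T.basisA_mul, T.basisA_mul]
  rw [smul_smul, smul_smul, smul_smul]
  have e1 : ((m + 1 : ℤ) + (p - 1) : ℤ) = m + p := by ring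
  have e2 : ((p - 1 : ℤ) + (m + 1) : ℤ) = m + p := by ring
  have e3 : ((p : ℤ) + m : ℤ) = m + p := by ring
  rw [e1, e2, e3]
  have hs : T.qc ^ (-(p - 1)) * T.qc ^ ((m + 1) * p)
      = T.qc * T.qc ^ m * T.qc ^ ((p - 1) * m) := by
    rw [mul_assoc, ← zpow_add₀ T.qc_ne, ← zpow_add₀ T.qc_ne,
      ← zpow_one_add₀ T.qc_ne]
    congr 1
    ring
  rw [hs]

end TorusBundle2
namespace TorusBundle2

variable (T : TorusBundle2)

lemma rhoV_du : T.FA.ρV (T.FA.d T.u)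
    = T.FA.d T.u ⊗ₜ[ℂ] (↑(T.t ^ (1 : ℤ)) : T.H) := by
  rw [T.FA.ρV_d, T.rho_u', LinearMap.rTensor_tmul]

lemma rhoV_dv : T.FA.ρV (T.FA.d T.v)
    = T.FA.d T.v ⊗ₜ[ℂ] (↑(T.t ^ (-1 : ℤ)) : T.H) := by
  rw [T.FA.ρV_d, T.rho_v', LinearMap.rTensor_tmul]

lemma rhoV_lact_du (m n : ℤ) :
    T.FA.ρV (T.FA.lact (T.basisA (m, n)) (T.FA.d T.u))
      = T.FA.lact (T.basisA (m, n)) (T.FA.d T.u) ⊗ₜ[ℂ] (↑(T.t ^ (m - n + 1)) : T.H) := by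
  rw [T.FA.ρV_l, T.rhoV_du, T.rho_basisA, actT_tmul, LinearMap.mul_apply',
    ← Units.val_mul, ← zpow_add]

lemma rhoV_lact_dv (m n : ℤ) :
    T.FA.ρV (T.FA.lact (T.basisA (m, n)) (T.FA.d T.v))
      = T.FA.lact (T.basisA (m, n)) (T.FA.d T.v) ⊗ₜ[ℂ] (↑(T.t ^ (m - n - 1)) : T.H) := by
  rw [T.FA.ρV_l, T.rhoV_dv, T.rho_basisA, actT_tmul, LinearMap.mul_apply',
    ← Units.val_mul, ← zpow_add]
  rw [sub_eq_add_neg (m - n) 1]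

lemma coordH (j w : ℤ) :
    T.basisH.coord j (↑(T.t ^ w) : T.H) = if w = j then 1 else 0 := by
  rw [← T.basisH_eq, Module.Basis.coord_apply, Module.Basis.repr_self, Finsupp.single_apply]

/-- The weight-`j` projection of `V1`. -/
def Pj (j : ℤ) : T.V1 →ₗ[ℂ] T.V1 :=
  (TensorProduct.rid ℂ T.V1).toLinearMap ∘ₗ
    (LinearMap.lTensor T.V1 (T.basisH.coord j)) ∘ₗ T.FA.ρV

/-- The weight-`w` projection of `A`. -/
def Aw (w : ℤ) : T.A →ₗ[ℂ] T.A :=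
  T.basisA.constr ℂ (fun i => if i.1 - i.2 = w then T.basisA i else 0)

lemma Pj_lact_du (j : ℤ) (c : T.A) :
    T.Pj j (T.FA.lact c (T.FA.d T.u))
      = T.FA.lact (T.Aw (j - 1) c) (T.FA.d T.u) := by
  have h : (T.Pj j) ∘ₗ (T.FA.lact.flip (T.FA.d T.u))
      = (T.FA.lact.flip (T.FA.d T.u)) ∘ₗ T.Aw (j - 1) := by
    apply T.basisA.ext
    rintro ⟨m, n⟩
    simp only [LinearMap.comp_apply, LinearMap.flip_apply, Aw, Module.Basis.constr_basis]
    rw [Pj]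
    simp only [LinearMap.comp_apply, LinearEquiv.coe_coe]
    rw [T.rhoV_lact_du, LinearMap.lTensor_tmul, T.coordH, TensorProduct.rid_tmul]
    by_cases hc : (m : ℤ) - n + 1 = j
    · rw [if_pos hc, if_pos (by omega : (m : ℤ) - n = j - 1), one_smul]
    · rw [if_neg hc, if_neg (by omega : ¬((m : ℤ) - n = j - 1)), zero_smul, map_zero,
        LinearMap.zero_apply]
  exact DFunLike.congr_fun h c

lemma Pj_lact_dv (j : ℤ) (c : T.A) :
    T.Pj j (T.FA.lact c (T.FA.d T.v))
      = T.FA.lact (T.Aw (j + 1) c) (T.FA.d T.v) := by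
  have h : (T.Pj j) ∘ₗ (T.FA.lact.flip (T.FA.d T.v))
      = (T.FA.lact.flip (T.FA.d T.v)) ∘ₗ T.Aw (j + 1) := by
    apply T.basisA.ext
    rintro ⟨m, n⟩
    simp only [LinearMap.comp_apply, LinearMap.flip_apply, Aw, Module.Basis.constr_basis]
    rw [Pj]
    simp only [LinearMap.comp_apply, LinearEquiv.coe_coe]
    rw [T.rhoV_lact_dv, LinearMap.lTensor_tmul, T.coordH, TensorProduct.rid_tmul]
    by_cases hc : (m : ℤ) - n - 1 = j
    · rw [if_pos hc, if_pos (by omega : (m : ℤ) - n = j + 1), one_smul]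
    · rw [if_neg hc, if_neg (by omega : ¬((m : ℤ) - n = j + 1)), zero_smul, map_zero,
        LinearMap.zero_apply]
  exact DFunLike.congr_fun h c

lemma free_zero {x y : T.A}
    (h : T.FA.lact x (T.FA.d T.u) + T.FA.lact y (T.FA.d T.v) = 0) :
    x = 0 ∧ y = 0 := by
  obtain ⟨p, hp, hu⟩ := T.free1 0
  have h1 : (x, y) = p := hu (x, y) h.symm
  have h2 : ((0 : T.A), (0 : T.A)) = p := by
    apply hu
    simp only [map_zero, LinearMap.zero_apply, add_zero]
  have := h1.trans h2.symm
  exact ⟨congrArg Prod.fst this, congrArg Prod.snd this⟩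

lemma repr_Aw (w : ℤ) (i : ℤ × ℤ) (x : T.A) :
    T.basisA.repr (T.Aw w x) i
      = if i.1 - i.2 = w then T.basisA.repr x i else 0 := by
  by_cases hw : i.1 - i.2 = w
  · rw [if_pos hw]
    have h : T.basisA.coord i ∘ₗ T.Aw w = T.basisA.coord i := by
      apply T.basisA.ext
      rintro ⟨m, n⟩
      simp only [LinearMap.comp_apply, Aw, Module.Basis.constr_basis]
      by_cases h2 : (m : ℤ) - n = w
      · rw [if_pos h2]
      · rw [if_neg h2, map_zero, Module.Basis.coord_apply, Module.Basis.repr_self,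
          Finsupp.single_apply, if_neg]
        intro hc
        apply h2
        rw [← hc] at hw
        simpa using hw
    have := DFunLike.congr_fun h x
    simpa [Module.Basis.coord_apply] using this
  · rw [if_neg hw]
    have h : T.basisA.coord i ∘ₗ T.Aw w = 0 := by
      apply T.basisA.ext
      rintro ⟨m, n⟩
      simp only [LinearMap.comp_apply, Aw, Module.Basis.constr_basis, LinearMap.zero_apply]
      by_cases h2 : (m : ℤ) - n = w
      · rw [if_pos h2, Module.Basis.coord_apply, Module.Basis.repr_self, Finsupp.single_apply, if_neg]
        intro hc
        apply hw
        rw [← hc]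
        simpa using h2
      · rw [if_neg h2, map_zero]
    have := DFunLike.congr_fun h x
    simpa [Module.Basis.coord_apply] using this

end TorusBundle2
namespace TorusBundle2

variable (T : TorusBundle2)

/-- The span of the basis elements on the shifted diagonal. -/
def SpanDiag (δ : ℤ) : Submodule ℂ T.A :=
  Submodule.span ℂ (Set.range (fun m : ℤ => T.basisA (m, m + δ)))

lemma mem_span_diag (δ : ℤ) (x : T.A)
    (hx : ∀ i : ℤ × ℤ, i.2 ≠ i.1 + δ → T.basisA.repr x i = 0) :
    x ∈ T.SpanDiag δ := by
  have h0 := T.basisA.mem_span_repr_support x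
  refine Submodule.span_mono ?_ h0
  rintro _ ⟨i, hi, rfl⟩
  have hi2 : i.2 = i.1 + δ := by
    by_contra hc
    exact (Finsupp.mem_support_iff.mp hi) (hx i hc)
  exact ⟨i.1, by rw [show i = (i.1, i.1 + δ) from Prod.ext rfl hi2]⟩

lemma D2_span {b : T.A} (hb : b ∈ T.SpanDiag (-1)) :
    T.D2 b = -T.Phi (b * T.v) := by
  induction hb using Submodule.span_induction with
  | mem x hx =>
      obtain ⟨m, rfl⟩ := hx
      show T.D2 (T.basisA (m, m + -1)) = -T.Phi (T.basisA (m, m + -1) * T.v)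
      rw [show ((m : ℤ) + -1 : ℤ) = m - 1 from by ring]
      exact T.D2_diag m
  | zero => simp
  | add x y hx hy ihx ihy =>
      rw [map_add, ihx, ihy, add_mul, map_add, neg_add]
  | smul c x hx ih =>
      rw [map_smul, ih, smul_mul_assoc, map_smul, smul_neg]

lemma Z1 {a b : T.A} (hb : b ∈ T.SpanDiag (-1)) (hab : a * T.u - b * T.v = 1) :
    T.D1 a + T.D2 b = 0 := by
  have h1 : T.D1 a = T.Phi (a * T.u) := by
    rw [T.D1_eq]; rfl
  rw [h1, T.D2_span hb, ← sub_eq_add_neg, ← map_sub, hab, T.Phi_one]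

lemma Z2 {a b : T.A} (ha : a ∈ T.SpanDiag 1) (hb : b ∈ T.SpanDiag (-1)) :
    a * T.sigv b = T.qc • (b * T.sigu a) := by
  induction ha using Submodule.span_induction with
  | mem x hx =>
      obtain ⟨m, rfl⟩ := hx
      induction hb using Submodule.span_induction with
      | mem y hy =>
          obtain ⟨p, rfl⟩ := hy
          show T.basisA (m, m + 1) * T.sigv (T.basisA (p, p + -1))
            = T.qc • (T.basisA (p, p + -1) * T.sigu (T.basisA (m, m + 1)))
          rw [show ((p : ℤ) + -1 : ℤ) = p - 1 from by ring]
          exact T.Z2_pointwise m p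
      | zero => simp
      | add y z hy hz ihy ihz =>
          rw [map_add, mul_add, ihy, ihz, add_mul, smul_add]
      | smul c y hy ih =>
          rw [map_smul, mul_smul_comm, ih, smul_mul_assoc, smul_comm]
  | zero => simp
  | add x y hx hy ihx ihy =>
      rw [add_mul, ihx, ihy, map_add, mul_add, smul_add]
  | smul c x hx ih =>
      rw [smul_mul_assoc, ih, map_smul, mul_smul_comm, smul_comm]

lemma connRHS1_t (s : T.VH →ₗ[ℂ] T.V1) :
    connRHS1 T.LH T.FA s ((T.t : T.Hˣ) : T.H)
      = s (varpi1 T.LH ((T.t : T.Hˣ) : T.H)) ⊗ₜ[ℂ] (↑(T.t ^ (0 : ℤ)) : T.H) := by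
  rw [connRHS1]
  simp only [LinearMap.comp_apply, LinearEquiv.coe_coe]
  rw [T.grouplike_t, LinearMap.rTensor_tmul, T.grouplike_t, LinearMap.rTensor_tmul]
  simp only [LinearEquiv.coe_coe, TensorProduct.comm_tmul, TensorProduct.assoc_tmul,
    TensorProduct.map_tmul]
  congr 1
  rw [LinearMap.comp_apply, LinearMap.rTensor_tmul, LinearMap.mul'_apply]
  rw [T.t_eq_tz, antipode_unit_zpow T.grouplike_t T.counit_t 1, ← Units.val_mul,
    ← zpow_add]
  norm_num

lemma ker_counit_le :
    LinearMap.ker (Coalgebra.counit (R := ℂ) (A := T.H))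
      ≤ Submodule.span ℂ (Set.range (fun m : ℤ => (↑(T.t ^ m) : T.H) - 1)) := by
  intro h hh
  rw [LinearMap.mem_ker] at hh
  have hrep : (Finsupp.linearCombination ℂ ⇑T.basisH) (T.basisH.repr h) = h :=
    T.basisH.linearCombination_repr h
  rw [Finsupp.linearCombination_apply] at hrep
  have hsum : h = (T.basisH.repr h).sum fun m c => c • (↑(T.t ^ m) : T.H) := by
    conv_lhs => rw [← hrep]
    apply Finsupp.sum_congr
    intro m _
    rw [T.basisH_eq]
  have h2 : Coalgebra.counit (R := ℂ) h = (T.basisH.repr h).sum fun m c => c := by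
    conv_lhs => rw [hsum]
    rw [map_finsuppSum]
    apply Finsupp.sum_congr
    intro m _
    rw [map_smul, counit_unit_zpow T.counit_t m, smul_eq_mul, mul_one]
  have hε : (T.basisH.repr h).sum (fun m c => c) = 0 := by rw [← h2, hh]
  have h4 : (T.basisH.repr h).sum (fun m c => c • (1 : T.H)) = 0 := by
    have h5 := map_finsuppSum (LinearMap.toSpanSingleton ℂ T.H 1)
      (T.basisH.repr h) (fun m c => c)
    rw [hε, map_zero] at h5
    have h7 : (T.basisH.repr h).sum (fun m c => c • (1 : T.H))
        = (T.basisH.repr h).sum (fun m c => (LinearMap.toSpanSingleton ℂ T.H 1) c) := by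
      apply Finsupp.sum_congr
      intro m _
      rw [LinearMap.toSpanSingleton_apply]
    rw [h7, ← h5]
  have h3 : h = (T.basisH.repr h).sum fun m c => c • ((↑(T.t ^ m) : T.H) - 1) := by
    have h6 : (T.basisH.repr h).sum (fun m c => c • ((↑(T.t ^ m) : T.H) - 1))
        = (T.basisH.repr h).sum (fun m c => c • (↑(T.t ^ m) : T.H))
          - (T.basisH.repr h).sum (fun m c => c • (1 : T.H)) := by
      rw [← Finsupp.sum_sub]
      apply Finsupp.sum_congr
      intro m _
      rw [smul_sub]
    rw [h6, h4, sub_zero]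
    exact hsum
  rw [h3]
  apply Submodule.finsuppSum_mem
  intro m _
  exact Submodule.smul_mem _ _ (Submodule.subset_span ⟨m, rfl⟩)

end TorusBundle2
namespace TorusBundle2

variable (T : TorusBundle2)

lemma w_lact_lact_du_du (x y : T.A) :
    T.wedge (T.FA.lact x (T.FA.d T.u)) (T.FA.lact y (T.FA.d T.u)) = 0 := by
  rw [← T.wedge_mid, (T.FA.toFODC.lr_comm x y _).symm, T.ract_du_sig,
    ← T.FA.toFODC.lact_mul_apply, T.w_lact_du_du]

lemma w_lact_lact_dv_dv (x y : T.A) :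
    T.wedge (T.FA.lact x (T.FA.d T.v)) (T.FA.lact y (T.FA.d T.v)) = 0 := by
  rw [← T.wedge_mid, (T.FA.toFODC.lr_comm x y _).symm, T.ract_dv_sig,
    ← T.FA.toFODC.lact_mul_apply, T.w_lact_dv_dv]

lemma w_lact_lact_du_dv (x y : T.A) :
    T.wedge (T.FA.lact x (T.FA.d T.u)) (T.FA.lact y (T.FA.d T.v))
      = T.Wc (x * T.sigv y) := by
  rw [← T.wedge_mid, (T.FA.toFODC.lr_comm x y _).symm, T.ract_du_sig,
    ← T.FA.toFODC.lact_mul_apply, T.Wc_apply]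

lemma w_lact_lact_dv_du (x y : T.A) :
    T.wedge (T.FA.lact x (T.FA.d T.v)) (T.FA.lact y (T.FA.d T.u))
      = -(T.qc • T.Wc (x * T.sigu y)) := by
  rw [← T.wedge_mid, (T.FA.toFODC.lr_comm x y _).symm, T.ract_dv_sig,
    ← T.FA.toFODC.lact_mul_apply, T.w_lact_dv_du]

end TorusBundle2
/-- Every connection 1-form on the noncommutative algebraic 2-torus is flat:
its curvature `R_s(h) = d s(ϖ(h)) + s(ϖ(π_ε(h₁))) ∧ s(ϖ(π_ε(h₂)))` vanishes
for all `h ∈ H⁺`. -/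
theorem torus_connections_flat (T : TorusBundle2) :
    ∀ s : T.VH →ₗ[ℂ] T.V1, IsConnForm1 T.FA T.LH T.FO s →
      ∀ h ∈ LinearMap.ker (Coalgebra.counit (R := ℂ) (A := T.H)),
        T.d1 (s (varpi1 T.LH h)) +
          TensorProduct.lift T.wedge
            (TensorProduct.map (s ∘ₗ varpi1 T.LH) (s ∘ₗ varpi1 T.LH)
              (Coalgebra.comul (R := ℂ) h)) = 0 := by
  intro s hs
  set ω := s (varpi1 T.LH ((T.t : T.Hˣ) : T.H)) with hω
  obtain ⟨⟨a, b⟩, hab, -⟩ := T.free1 ω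
  have hab' : ω = T.FA.lact a (T.FA.d T.u) + T.FA.lact b (T.FA.d T.v) := hab
  -- coinvariance of ω
  have hcoinv : T.FA.ρV ω = ω ⊗ₜ[ℂ] (↑(T.t ^ (0 : ℤ)) : T.H) := by
    rw [hω, hs.1 ((T.t : T.Hˣ) : T.H), T.connRHS1_t s]
  -- Fourier support of a and b
  have hAwa : ∀ j : ℤ, j ≠ 0 → T.Aw (j - 1) a = 0 ∧ T.Aw (j + 1) b = 0 := by
    intro j hj
    have hP : T.Pj j ω = 0 := by
      simp only [TorusBundle2.Pj, LinearMap.comp_apply, LinearEquiv.coe_coe]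
      rw [hcoinv, LinearMap.lTensor_tmul, T.coordH,
        if_neg (fun hc => hj hc.symm), TensorProduct.tmul_zero, map_zero]
    have hP2 : T.Pj j ω
        = T.FA.lact (T.Aw (j - 1) a) (T.FA.d T.u)
          + T.FA.lact (T.Aw (j + 1) b) (T.FA.d T.v) := by
      rw [hab', map_add, T.Pj_lact_du, T.Pj_lact_dv]
    exact T.free_zero (by rw [← hP2, hP])
  have hamem : a ∈ T.SpanDiag 1 := by
    apply T.mem_span_diag
    intro i hi
    have hj : (i.1 - i.2 + 1 : ℤ) ≠ 0 := by omega
    have h0 := (hAwa _ hj).1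
    have h1 := T.repr_Aw (i.1 - i.2 + 1 - 1) i a
    rw [h0] at h1
    rw [if_pos (by omega : i.1 - i.2 = i.1 - i.2 + 1 - 1)] at h1
    simpa using h1.symm
  have hbmem : b ∈ T.SpanDiag (-1) := by
    apply T.mem_span_diag
    intro i hi
    have hj : (i.1 - i.2 - 1 : ℤ) ≠ 0 := by omega
    have h0 := (hAwa _ hj).2
    have h1 := T.repr_Aw (i.1 - i.2 - 1 + 1) i b
    rw [h0] at h1
    rw [if_pos (by omega : i.1 - i.2 = i.1 - i.2 - 1 + 1)] at h1
    simpa using h1.symm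
  -- the vertical-projection constraint
  have hθ : varpi1 T.LH ((T.t : T.Hˣ) : T.H) ∈ Lam1 T.LH := by
    rw [T.t_eq_tz]
    exact T.varpi_tz_mem 1
  have hpv := hs.2 _ hθ
  have hcalc : T.FO.pv ω
      = (a * T.u - b * T.v) ⊗ₜ[ℂ] varpi1 T.LH ((T.t : T.Hˣ) : T.H) := by
    rw [hab', map_add, T.pv_lact a T.u 1 T.rho_u', T.pv_lact b T.v (-1) T.rho_v',
      T.varpi_tinv, TensorProduct.tmul_neg, ← sub_eq_add_neg,
      ← TensorProduct.sub_tmul, ← T.t_eq_tz]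
  have habv : a * T.u - b * T.v = 1 := by
    have h8 : (a * T.u - b * T.v - 1) ⊗ₜ[ℂ] varpi1 T.LH ((T.t : T.Hˣ) : T.H) = 0 := by
      rw [TensorProduct.sub_tmul, ← hcalc, hω, hpv, sub_self]
    exact sub_eq_zero.mp (T.tmul_varpi_cancel h8)
  -- flatness identities
  have hd1 : T.d1 ω = 0 := by
    rw [hab', map_add, T.d1_leibniz, T.d1_leibniz, T.d1_d, T.d1_d, map_zero, map_zero,
      add_zero, add_zero, T.wd_du, T.wd_dv, ← map_add, T.Z1 hbmem habv, map_zero]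
  have hW : T.wedge ω ω = 0 := by
    rw [hab']
    simp only [map_add, LinearMap.add_apply]
    rw [T.w_lact_lact_du_du, T.w_lact_lact_dv_dv, T.w_lact_lact_du_dv,
      T.w_lact_lact_dv_du, T.Z2 hamem hbmem, map_smul]
    abel
  -- assemble the curvature as a linear map and use the spanning set of `ker ε`
  set L : T.H →ₗ[ℂ] T.W2 :=
    T.d1 ∘ₗ s ∘ₗ varpi1 T.LH +
      (TensorProduct.lift T.wedge) ∘ₗ
        (TensorProduct.map (s ∘ₗ varpi1 T.LH) (s ∘ₗ varpi1 T.LH)) ∘ₗ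
        (Coalgebra.comul (R := ℂ) (A := T.H)) with hL
  intro h hh
  show L h = 0
  have hv1 : varpi1 T.LH (1 : T.H) = 0 := by
    rw [show (1 : T.H) = (↑(T.t ^ (0 : ℤ)) : T.H) from by rw [zpow_zero, Units.val_one]]
    exact T.varpi_t0
  have hker : Submodule.span ℂ (Set.range fun m : ℤ => (↑(T.t ^ m) : T.H) - 1)
      ≤ LinearMap.ker L := by
    rw [Submodule.span_le]
    rintro x ⟨m, rfl⟩
    rw [SetLike.mem_coe, LinearMap.mem_ker]
    obtain ⟨c, hc⟩ := T.varpi_tz_smul m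
    have hcm : Coalgebra.comul (R := ℂ) ((↑(T.t ^ m) : T.H) - 1)
        = (↑(T.t ^ m) : T.H) ⊗ₜ[ℂ] (↑(T.t ^ m) : T.H)
          - (1 : T.H) ⊗ₜ[ℂ] (1 : T.H) := by
      rw [map_sub, comul_unit_zpow T.grouplike_t m, Bialgebra.comul_one,
        Algebra.TensorProduct.one_def]
    rw [hL]
    simp only [LinearMap.add_apply, LinearMap.comp_apply]
    rw [map_sub, hc, hv1, sub_zero, map_smul, map_smul, ← hω, hd1, smul_zero]
    rw [hcm, map_sub, map_sub]
    simp only [TensorProduct.map_tmul, LinearMap.comp_apply]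
    rw [hc, hv1, map_zero, map_smul, ← hω, TensorProduct.zero_tmul, map_zero,
      sub_zero, TensorProduct.lift.tmul]
    simp only [map_smul, LinearMap.smul_apply]
    rw [hW, smul_zero, smul_zero, zero_add]
  exact hker (T.ker_counit_le hh)

end QPBPaper
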